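/- arXiv:1401.1120 — 14 statements merged into one kernel-verified Lean document; each statement's English description precedes it below -/
import Mathlib

section
/- For λ ∈ ℂ*, a ∈ ℂ, and any integers i, j, the operators D_i on ℂ[x] defined by (D_i f)(x) = λ^i (x - i(a+1)) f(x - i) satisfy the Witt algebra relation D_i ∘ D_j - D_j ∘ D_i = (j - i) D_{i+j}. -/
open Polynomial

/-- the operators `D_i f = λ^i (x - i(a+1)) f(x-i)` on `ℂ[x]`
satisfy the Witt algebra relation `D_i ∘ D_j - D_j ∘ D_i = (j-i) D_{i+j}`. -/
theorem witt_relations_omega (l a : ℂ) (hl : l ≠ 0)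
    (D : ℤ → Polynomial ℂ → Polynomial ℂ)
    (hD : ∀ (i : ℤ) (f : Polynomial ℂ),
      D i f = l ^ i • ((X - C ((i : ℂ) * (a + 1))) * f.comp (X - C (i : ℂ)))) :
    ∀ (i j : ℤ) (f : Polynomial ℂ),
      D i (D j f) - D j (D i f) = ((j : ℂ) - (i : ℂ)) • D (i + j) f := by
  intro i j f
  apply Polynomial.funext
  intro x
  simp only [hD, eval_sub, eval_smul, eval_mul, eval_comp, eval_X, eval_C,
    smul_eq_mul, zpow_add₀ hl, Int.cast_add]
  ring_nf
end

section
/- For λ ∈ ℂ* and a ∈ ℂ, the operators on ℂ[x] given by D_{-1} f(x) = λ^{-1} f(x+1), D_0 f(x) = x f(x), and for k ≥ 1, D_k f(x) = λ^k f(x-k) (x - k(a+1)) ∏_{i=0}^{k-1} (x + a - i), satisfy D_i ∘ D_j - D_j ∘ D_i = (j - i) D_{i+j} for all i, j ≥ -1. -/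
open Polynomial Finset

noncomputable def Pa (a : ℂ) (n : ℕ) : Polynomial ℂ :=
  ∏ i ∈ Finset.range n, (X + C a - C (i : ℂ))

lemma Pa_comp (a : ℂ) (n : ℕ) (q : Polynomial ℂ) :
    (Pa a n).comp q = ∏ i ∈ Finset.range n, (q + C a - C (i : ℂ)) := by
  unfold Pa
  rw [Polynomial.prod_comp]
  refine Finset.prod_congr rfl fun i _ => by simp

lemma Pa_add (a : ℂ) (m k : ℕ) :
    Pa a (m + k) = Pa a m * (Pa a k).comp (X - C (m : ℂ)) := by
  rw [Pa_comp]
  unfold Pa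
  rw [Finset.prod_range_add]
  congr 1
  refine Finset.prod_congr rfl fun i _ => by push_cast [map_add, map_one]; ring

lemma Pa_comp_X_add_one (a : ℂ) (n : ℕ) :
    (Pa a (n + 1)).comp (X + 1) = (X + 1 + C a) * Pa a n := by
  rw [Pa_comp, Finset.prod_range_succ']
  unfold Pa
  rw [mul_comm]
  congr 1
  · simp
  · refine Finset.prod_congr rfl fun i _ => by push_cast [map_add, map_one]; ring

lemma Pa_succ (a : ℂ) (n : ℕ) :
    Pa a (n + 1) = Pa a n * (X + C a - C (n : ℂ)) :=
  Finset.prod_range_succ _ _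

noncomputable def Dd (l a : ℂ) (n : ℕ) (f : Polynomial ℂ) : Polynomial ℂ :=
  l ^ (n : ℤ) • (f.comp (X - C (n : ℂ)) * (X - C ((n : ℂ) * (a + 1))) * Pa a n)

noncomputable def Dneg (l : ℂ) (f : Polynomial ℂ) : Polynomial ℂ :=
  l⁻¹ • f.comp (X + 1)

lemma Dd_zero (l a : ℂ) (f : Polynomial ℂ) : Dd l a 0 f = X * f := by
  unfold Dd Pa
  simp [smul_eq_C_mul]
  ring

lemma comp_sub_sub (f : Polynomial ℂ) (u v : ℂ) :
    (f.comp (X - C u)).comp (X - C v) = f.comp (X - C (v + u)) := by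
  rw [comp_assoc]
  congr 1
  simp [sub_comp, map_add]
  ring

lemma L1 (l : ℂ) (f : Polynomial ℂ) :
    Dneg l (X * f) - X * Dneg l f = Dneg l f := by
  unfold Dneg
  simp only [smul_eq_C_mul, mul_comp, X_comp]
  ring

lemma key2 {R : Type*} [CommRing R] (ci c1 cn F P x u ca : R) (hc : ci * c1 = cn) :
    ci * (c1 * (F * (x + 1 - (u + 1) * (ca + 1)) * ((x + 1 + ca) * P)))
      - c1 * (ci * (F * (x - (u + 1) * (ca + 1)) * (P * (x + ca - u))))
      = (u + 2) * (cn * (F * (x - u * (ca + 1)) * P)) := by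
  linear_combination ((u + 2) * (F * (x - u * (ca + 1)) * P)) * hc

lemma L2 (l a : ℂ) (hl : l ≠ 0) (n : ℕ) (f : Polynomial ℂ) :
    Dneg l (Dd l a (n + 1) f) - Dd l a (n + 1) (Dneg l f)
      = ((n : ℂ) + 2) • Dd l a n f := by
  have hc : C l⁻¹ * C (l ^ ((n : ℤ) + 1)) = C (l ^ (n : ℤ)) := by
    rw [← map_mul, zpow_add₀ hl, zpow_one]
    congr 1
    field_simp
  have e1 : (f.comp (X - C ((n + 1 : ℕ) : ℂ))).comp (X + 1) = f.comp (X - C (n : ℂ)) := by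
    rw [comp_assoc]; congr 1; simp only [sub_comp, add_comp, X_comp, C_comp, one_comp]; push_cast [map_add, map_one]; ring
  have e2 : (f.comp (X + 1)).comp (X - C ((n + 1 : ℕ) : ℂ)) = f.comp (X - C (n : ℂ)) := by
    rw [comp_assoc]; congr 1; simp only [sub_comp, add_comp, X_comp, C_comp, one_comp]; push_cast [map_add, map_one]; ring
  unfold Dneg Dd
  simp only [smul_eq_C_mul, mul_comp, add_comp, sub_comp, X_comp, C_comp, one_comp]
  rw [e1, e2, Pa_comp_X_add_one, Pa_succ]
  simp only [Nat.cast_add, Nat.cast_one, map_add, map_mul, map_one, map_ofNat]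
  linear_combination key2 (C l⁻¹) (C (l ^ ((n : ℤ) + 1))) (C (l ^ (n : ℤ)))
    (f.comp (X - C (n : ℂ))) (Pa a n) X (C (n : ℂ)) (C a) hc

lemma key4 {R : Type*} [CommRing R] (cm ck F Ak Am Qm Qk P x u v c : R)
    (h1 : Ak * Qm = P) (h2 : Am * Qk = P) :
    cm * ck * (F * (x - u - v * c) * Ak * (x - u * c) * Qm)
      - cm * ck * (F * (x - v - u * c) * Am * (x - v * c) * Qk)
      = (v - u) * (cm * ck * (F * (x - u * c - v * c) * P)) := by
  subst h1
  linear_combination (- (cm * ck * (F * (x - v - u * c) * (x - v * c)))) * h2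

lemma L4 (l a : ℂ) (hl : l ≠ 0) (m k : ℕ) (f : Polynomial ℂ) :
    Dd l a m (Dd l a k f) - Dd l a k (Dd l a m f)
      = ((k : ℂ) - (m : ℂ)) • Dd l a (m + k) f := by
  have hc : C (l ^ (m : ℤ)) * C (l ^ (k : ℤ)) = C (l ^ ((m : ℤ) + (k : ℤ))) := by
    rw [← map_mul, ← zpow_add₀ hl]
  have h1 : (Pa a k).comp (X - C (m : ℂ)) * Pa a m = Pa a (m + k) := by
    rw [Pa_add a m k]; ring
  have h2 : (Pa a m).comp (X - C (k : ℂ)) * Pa a k = Pa a (m + k) := by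
    rw [show m + k = k + m from Nat.add_comm m k, Pa_add a k m]; ring
  unfold Dd
  simp only [smul_eq_C_mul, mul_comp, add_comp, sub_comp, X_comp, C_comp, comp_sub_sub,
    map_mul, map_add, map_one, map_sub, one_comp, Nat.cast_add]
  rw [← hc]
  rw [show (C (k:ℂ) + C (m:ℂ)) = (C (m:ℂ) + C (k:ℂ)) from add_comm _ _]
  linear_combination key4 (C (l ^ (m:ℤ))) (C (l ^ (k:ℤ))) (f.comp (X - (C (m:ℂ) + C (k:ℂ))))
      ((Pa a k).comp (X - C (m:ℂ))) ((Pa a m).comp (X - C (k:ℂ))) (Pa a m) (Pa a k)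
      (Pa a (m + k)) X (C (m:ℂ)) (C (k:ℂ)) (C a + 1) h1 h2

/-- the operators defining `Γ(λ,a)` satisfy the `W_1^+` relations. -/
theorem witt_plus_relations_gamma (l a : ℂ) (hl : l ≠ 0)
    (D : ℤ → Polynomial ℂ → Polynomial ℂ)
    (hDneg : ∀ f : Polynomial ℂ, D (-1) f = l⁻¹ • f.comp (X + 1))
    (hD0 : ∀ f : Polynomial ℂ, D 0 f = X * f)
    (hDk : ∀ k : ℤ, 1 ≤ k → ∀ f : Polynomial ℂ,
      D k f = l ^ k • (f.comp (X - C (k : ℂ)) * (X - C ((k : ℂ) * (a + 1))) *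
        ∏ i ∈ Finset.range k.toNat, (X + C a - C (i : ℂ)))) :
    ∀ i j : ℤ, -1 ≤ i → -1 ≤ j → ∀ f : Polynomial ℂ,
      D i (D j f) - D j (D i f) = ((j : ℂ) - (i : ℂ)) • D (i + j) f := by
  have hDnat : ∀ (n : ℕ) (f : Polynomial ℂ), D (n : ℤ) f = Dd l a n f := by
    intro n f
    rcases Nat.eq_zero_or_pos n with rfl | hn
    · simpa using (hD0 f).trans (Dd_zero l a f).symm
    · rw [hDk (n : ℤ) (by exact_mod_cast hn) f]
      unfold Dd Pa
      norm_num
  have key : ∀ i j : ℤ, -1 ≤ i → -1 ≤ j → i ≤ j → ∀ f : Polynomial ℂ,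
      D i (D j f) - D j (D i f) = ((j : ℂ) - (i : ℂ)) • D (i + j) f := by
    intro i j hi hj hij f
    rcases eq_or_lt_of_le hij with rfl | hlt
    · simp
    rcases lt_or_ge i 0 with hi0 | hi0
    · have hi1 : i = -1 := by omega
      subst hi1
      obtain ⟨n, rfl⟩ : ∃ n : ℕ, j = (n : ℤ) := ⟨j.toNat, by omega⟩
      rcases Nat.eq_zero_or_pos n with rfl | hn
      · rw [Nat.cast_zero, hD0, hDneg, hDneg, hD0]
        rw [show (-1 + (0 : ℤ)) = -1 by ring, hDneg]
        rw [show (((0:ℤ):ℂ) - ((-1 : ℤ):ℂ)) = (1 : ℂ) by norm_num, one_smul]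
        simpa [Dneg] using L1 l f
      · obtain ⟨s, rfl⟩ : ∃ s : ℕ, n = s + 1 := ⟨n - 1, by omega⟩
        rw [hDnat (s + 1) f, hDneg f, hDneg (Dd l a (s + 1) f),
          hDnat (s + 1) (l⁻¹ • f.comp (X + 1))]
        rw [show (-1 + ((s + 1 : ℕ) : ℤ)) = ((s : ℕ) : ℤ) by push_cast; ring, hDnat]
        rw [show ((((s + 1 : ℕ) : ℤ) : ℂ) - ((-1 : ℤ) : ℂ)) = ((s : ℂ) + 2) by push_cast; ring]
        simpa [Dneg] using L2 l a hl s f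
    · obtain ⟨m, rfl⟩ : ∃ m : ℕ, i = (m : ℤ) := ⟨i.toNat, by omega⟩
      obtain ⟨n, rfl⟩ : ∃ n : ℕ, j = (n : ℤ) := ⟨j.toNat, by omega⟩
      rw [hDnat n f, hDnat m f, hDnat m (Dd l a n f), hDnat n (Dd l a m f)]
      rw [show ((m : ℤ) + (n : ℤ)) = ((m + n : ℕ) : ℤ) by push_cast; ring, hDnat]
      rw [show ((((n : ℕ) : ℤ) : ℂ) - (((m : ℕ) : ℤ) : ℂ)) = ((n : ℂ) - (m : ℂ)) by push_cast; ring]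
      exact L4 l a hl m n f
  intro i j hi hj f
  rcases le_total i j with h | h
  · exact key i j hi hj h f
  · have hk := key j i hj hi h f
    rw [add_comm j i] at hk
    calc D i (D j f) - D j (D i f) = -(((i : ℂ) - (j : ℂ)) • D (i + j) f) := by
          rw [← hk]; ring
      _ = ((j : ℂ) - (i : ℂ)) • D (i + j) f := by rw [← neg_smul, neg_sub]
end

section
/- For any λ ∈ ℂ*, the W_1^+-modules Γ(λ, 0) and Γ(λ, -1) are isomorphic. -/
open Polynomial

/-- The `W_1^+`-module action of `d_k` (`k ≥ -1`) on `Γ(λ,a) = ℂ[x]`. -/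
noncomputable def gammaAct (l a : ℂ) (k : ℤ) (f : Polynomial ℂ) : Polynomial ℂ :=
  if k = -1 then l⁻¹ • f.comp (X + 1)
  else if k = 0 then X * f
  else l ^ k • (f.comp (X - C (k : ℂ)) * (X - C ((k : ℂ) * (a + 1))) *
    ∏ i ∈ Finset.range k.toNat, (X + C a - C (i : ℂ)))

lemma key_prod (n : ℕ) :
    (X - C (n : ℂ)) * ∏ i ∈ Finset.range n, (X - C (i : ℂ)) =
    X * ∏ i ∈ Finset.range n, (X - C ((i : ℂ) + 1)) := by
  have h1 : (X - C (n : ℂ)) * ∏ i ∈ Finset.range n, (X - C (i : ℂ)) =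
      ∏ i ∈ Finset.range (n + 1), (X - C (i : ℂ)) := by
    rw [Finset.prod_range_succ, mul_comm]
  have h2 : ∏ i ∈ Finset.range (n + 1), (X - C (i : ℂ)) =
      (∏ i ∈ Finset.range n, (X - C ((i : ℂ) + 1))) * X := by
    rw [Finset.prod_range_succ']
    simp [Nat.cast_succ]
  rw [h1, h2, mul_comm]

/-- `Γ(λ, 0) ≅ Γ(λ, -1)` as `W_1^+`-modules. -/
theorem gamma_zero_iso_gamma_neg_one (l : ℂ) (hl : l ≠ 0) :
    ∃ φ : Polynomial ℂ ≃ₗ[ℂ] Polynomial ℂ,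
      ∀ k : ℤ, -1 ≤ k → ∀ f : Polynomial ℂ,
        φ (gammaAct l 0 k f) = gammaAct l (-1) k (φ f) := by
  refine ⟨LinearEquiv.refl ℂ _, ?_⟩
  intro k hk f
  simp only [LinearEquiv.refl_apply]
  unfold gammaAct
  split_ifs with h1 h2
  · rfl
  · rfl
  · -- k ≥ 1
    have hk1 : 1 ≤ k := by omega
    obtain ⟨n, hn⟩ : ∃ n : ℕ, k = (n : ℤ) := ⟨k.toNat, by omega⟩
    congr 1
    have hcast : ((k : ℂ)) = (n : ℂ) := by exact_mod_cast congrArg (Int.cast : ℤ → ℂ) hn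
    have htn : k.toNat = n := by omega
    rw [htn, hcast]
    have : ∀ i : ℕ, X + C (-1 : ℂ) - C (i : ℂ) = X - C ((i : ℂ) + 1) := by
      intro i; rw [map_add, map_neg, map_one]; ring
    simp only [this, add_zero, neg_add_cancel, mul_zero, map_zero, sub_zero, mul_one, C_0]
    rw [show ((n:ℂ)*(0+1)) = (n:ℂ) by ring, mul_assoc, mul_assoc, key_prod n]
end

section
/- The W_1^+-module Ω(λ, a) (restriction of the Virasoro module) is simple if and only if a ≠ -1. -/
open Polynomial

/-- The `W_1^+`-module action of `d_k` (`k ≥ -1`) on `Ω(λ,a) = ℂ[x]`. -/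
noncomputable def omegaAct (l a : ℂ) (k : ℤ) (f : Polynomial ℂ) : Polynomial ℂ :=
  l ^ k • ((X - C ((k : ℂ) * (a + 1))) * f.comp (X - C (k : ℂ)))

/-- the `W_1^+`-module `Ω(λ,a)` is simple iff `a ≠ -1`. -/
theorem omega_simple_iff (l a : ℂ) (hl : l ≠ 0) :
    (∀ N : Submodule ℂ (Polynomial ℂ),
        (∀ k : ℤ, -1 ≤ k → ∀ f ∈ N, omegaAct l a k f ∈ N) → N = ⊥ ∨ N = ⊤)
      ↔ a ≠ -1 := by
  constructor
  · -- simplicity ⇒ a ≠ -1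
    intro hsimp ha
    subst ha
    -- the submodule of polynomials vanishing at 0
    set N : Submodule ℂ (Polynomial ℂ) := LinearMap.ker (Polynomial.leval (0 : ℂ)) with hNdef
    have hmemN : ∀ f : Polynomial ℂ, f ∈ N ↔ f.eval 0 = 0 := by
      intro f; simp [hNdef, Polynomial.leval]
    have hinv : ∀ k : ℤ, -1 ≤ k → ∀ f ∈ N, omegaAct l (-1 : ℂ) k f ∈ N := by
      intro k _ f _
      rw [hmemN]
      have h0 : (-1 : ℂ) + 1 = 0 := by ring
      simp [omegaAct, h0]
    rcases hsimp N hinv with h | h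
    · have : (X : Polynomial ℂ) ∈ N := by rw [hmemN]; simp
      rw [h, Submodule.mem_bot] at this
      exact Polynomial.X_ne_zero this
    · have : (1 : Polynomial ℂ) ∈ N := h ▸ Submodule.mem_top
      rw [hmemN] at this
      simp at this
  · -- a ≠ -1 ⇒ simplicity
    intro ha N hN
    by_cases hbot : N = ⊥
    · exact Or.inl hbot
    right
    have ha1 : a + 1 ≠ 0 := by
      intro h; apply ha; linear_combination h
    -- closure under multiplication by X (action of d_0)
    have hX : ∀ f ∈ N, X * f ∈ N := by
      intro f hf
      have := hN 0 (by norm_num) f hf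
      simpa [omegaAct] using this
    -- closure under multiplication by any polynomial
    have hsm : ∀ (p f : Polynomial ℂ), f ∈ N → p * f ∈ N := by
      intro p f hf
      induction p using Polynomial.induction_on with
      | C b => simpa [Polynomial.smul_eq_C_mul] using N.smul_mem b hf
      | add p q hp hq => simpa [add_mul] using N.add_mem hp hq
      | monomial n b hb =>
          have h1 : C b * X ^ (n + 1) * f = X * (C b * X ^ n * f) := by ring
          rw [h1]; exact hX _ hb
    -- N is an ideal
    set I : Ideal (Polynomial ℂ) :=
      { carrier := N
        add_mem' := fun h1 h2 => N.add_mem h1 h2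
        zero_mem' := N.zero_mem
        smul_mem' := fun p f hf => by simpa [smul_eq_mul] using hsm p f hf } with hIdef
    have hmemI : ∀ f : Polynomial ℂ, f ∈ I ↔ f ∈ N := fun f => Iff.rfl
    -- generator
    set g : Polynomial ℂ := Submodule.IsPrincipal.generator I with hgdef
    have hgI : g ∈ I := Submodule.IsPrincipal.generator_mem I
    have hdvd_of_mem : ∀ f : Polynomial ℂ, f ∈ I → g ∣ f := by
      intro f hf
      rw [← Ideal.span_singleton_generator I, Ideal.mem_span_singleton] at hf
      exact hf
    have hg0 : g ≠ 0 := by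
      intro h
      apply hbot
      have : I = ⊥ := (Submodule.IsPrincipal.eq_bot_iff_generator_eq_zero I).2 h
      rw [Submodule.eq_bot_iff] at this ⊢
      intro f hf; exact this f ((hmemI f).2 hf)
    -- key divisibility from the action of d_n, n ≥ 1
    have key : ∀ n : ℕ, 1 ≤ n →
        g ∣ (X - C ((n : ℂ) * (a + 1))) * g.comp (X - C (n : ℂ)) := by
      intro n hn
      have h1 := hN (n : ℤ) (by omega) g ((hmemI g).1 hgI)
      have h2 : (l ^ (n : ℤ))⁻¹ • omegaAct l a (n : ℤ) g ∈ N := N.smul_mem _ h1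
      have h3 : (l ^ (n : ℤ))⁻¹ • omegaAct l a (n : ℤ) g
          = (X - C ((n : ℂ) * (a + 1))) * g.comp (X - C (n : ℂ)) := by
        rw [omegaAct, ← smul_assoc, smul_eq_mul, inv_mul_cancel₀ (zpow_ne_zero _ hl), one_smul]
        push_cast
        ring_nf
      rw [h3] at h2
      exact hdvd_of_mem _ ((hmemI _).2 h2)
    -- the finite set of differences of roots of g
    set T : Finset ℂ := (g.roots.toFinset ×ˢ g.roots.toFinset).image (fun p => p.1 - p.2)
      with hTdef
    have hfin : {n : ℕ | (n : ℂ) ∈ T}.Finite :=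
      Set.Finite.preimage (Set.injOn_of_injective Nat.cast_injective) T.finite_toSet
    -- choose two distinct positive naturals avoiding T
    obtain ⟨k₁, hk₁T, hk₁pos⟩ := hfin.infinite_compl.exists_gt 0
    obtain ⟨k₂, hk₂T, hk₁₂⟩ := hfin.infinite_compl.exists_gt k₁
    -- g is coprime to its shifts
    have hcop : ∀ n : ℕ, (n : ℂ) ∉ T → IsCoprime g (g.comp (X - C (n : ℂ))) := by
      intro n hnT
      rw [Polynomial.isCoprime_iff_aeval_ne_zero_of_isAlgClosed ℂ ℂ]
      intro z
      by_contra hz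
      push_neg at hz
      obtain ⟨hz1, hz2⟩ := hz
      simp only [Polynomial.aeval_def, eval₂_eq_eval_map, Algebra.algebraMap_self,
        Polynomial.map_id] at hz1 hz2
      rw [Polynomial.eval_comp] at hz2
      simp only [eval_sub, eval_X, eval_C] at hz2
      apply hnT
      rw [hTdef]
      apply Finset.mem_image.2
      refine ⟨⟨z, z - (n : ℂ)⟩, ?_, by ring⟩
      rw [Finset.mem_product]
      constructor <;> rw [Multiset.mem_toFinset, Polynomial.mem_roots hg0] <;>
        [exact hz1; exact hz2]
    -- hence g divides linear polynomials
    have hdvd1 : g ∣ X - C ((k₁ : ℂ) * (a + 1)) :=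
      (hcop k₁ hk₁T).dvd_of_dvd_mul_right (key k₁ hk₁pos)
    have hdvd2 : g ∣ X - C ((k₂ : ℂ) * (a + 1)) :=
      (hcop k₂ hk₂T).dvd_of_dvd_mul_right (key k₂ (by omega))
    -- the two linear polynomials are coprime, so g is a unit
    have hne : (k₁ : ℂ) * (a + 1) ≠ (k₂ : ℂ) * (a + 1) := by
      intro h
      have : (k₁ : ℂ) = (k₂ : ℂ) := mul_right_cancel₀ ha1 h
      exact (Nat.cast_injective this ▸ hk₁₂).false
    have hlincop : IsCoprime (X - C ((k₁ : ℂ) * (a + 1))) (X - C ((k₂ : ℂ) * (a + 1))) :=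
      Polynomial.isCoprime_X_sub_C_of_isUnit_sub (by
        apply IsUnit.mk0; exact sub_ne_zero.2 hne)
    have hgunit : IsUnit g := hlincop.isUnit_of_dvd' hdvd1 hdvd2
    have hItop : I = ⊤ := I.eq_top_of_isUnit_mem hgI hgunit
    rw [Submodule.eq_top_iff']
    intro f
    exact (hmemI f).1 (hItop ▸ Submodule.mem_top)
end

section
/- Let M = U(h_n)v be a W_n^+-module which is free of rank 1 over U(h_n). Then for every i and every admissible k ≠ 0, the element (t^k ∂_i) · v is nonzero. -/
open MvPolynomial Finset

/-- `k ∈ ℤ^n` is an admissible exponent for `t^k ∂_i ∈ W_n^+`: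
`k_i ≥ -1` and `k_j ≥ 0` for `j ≠ i`. -/
def Admissible {n : ℕ} (i : Fin n) (k : Fin n → ℤ) : Prop :=
  -1 ≤ k i ∧ ∀ j : Fin n, j ≠ i → 0 ≤ k j

/-- The standard basis vector. -/
private def ee {n : ℕ} (i : Fin n) : Fin n → ℤ := fun j => if j = i then 1 else 0

private lemma adm_ee {n : ℕ} (i : Fin n) : Admissible i (ee i) := by
  refine ⟨by simp [ee], fun j hj => by simp [ee, hj]⟩

private lemma adm_neg_ee {n : ℕ} (j : Fin n) : Admissible j (-(ee j)) := by
  refine ⟨by simp [ee], fun m hm => by simp [ee, hm]⟩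

private lemma adm_zero {n : ℕ} (i : Fin n) : Admissible i 0 := by
  refine ⟨by norm_num, fun j _ => le_refl 0⟩

private lemma sum_ee {n : ℕ} (i : Fin n) : ∑ j, ee (n := n) i j = 1 := by
  simp [ee]

private lemma sum_ge {n : ℕ} {i : Fin n} {k : Fin n → ℤ} (hk : Admissible i k) :
    -1 ≤ ∑ j, k j := by
  have h1 : (∑ j, (if j = i then (-1 : ℤ) else 0)) = -1 := by simp
  have h2 : (∑ j, (if j = i then (-1 : ℤ) else 0)) ≤ ∑ j, k j := by
    apply Finset.sum_le_sum
    intro j _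
    by_cases h : j = i
    · subst h; simpa using hk.1
    · simpa [h] using hk.2 j h
  omega

/-- if `M = U(h_n)v ≅ ℂ[∂_1,...,∂_n]` is a `W_n^+`-module free of rank 1
over `U(h_n)` with `h_n` acting by left multiplication, then `(t^k ∂_i) · v ≠ 0` for
every admissible `k ≠ 0`.  Here `T i k` is the action of `t^k ∂_i`, `v = 1`, and
`hbr` encodes the brackets `[t^r ∂_i, t^s ∂_j] = s_i t^{r+s} ∂_j - r_j t^{r+s} ∂_i`. -/
theorem action_on_generator_ne_zero {n : ℕ} (hn : 0 < n)
    (T : Fin n → (Fin n → ℤ) → (MvPolynomial (Fin n) ℂ →ₗ[ℂ] MvPolynomial (Fin n) ℂ))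
    (h0 : ∀ (j : Fin n) (f : MvPolynomial (Fin n) ℂ), T j 0 f = X j * f)
    (hbr : ∀ (i j : Fin n) (r s : Fin n → ℤ), Admissible i r → Admissible j s →
      ∀ f : MvPolynomial (Fin n) ℂ,
        T i r (T j s f) - T j s (T i r f)
          = (s i : ℂ) • T j (r + s) f - (r j : ℂ) • T i (r + s) f) :
    ∀ (i : Fin n) (k : Fin n → ℤ), Admissible i k → k ≠ 0 →
      T i k (1 : MvPolynomial (Fin n) ℂ) ≠ 0 := by
  have main : ∀ (i : Fin n) (N : ℕ) (k : Fin n → ℤ), Admissible i k →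
      (1 + ∑ j, k j).toNat ≤ N → (∀ f, T i k f = 0) → False := by
    intro i N
    induction N using Nat.strong_induction_on with
    | _ N IH =>
      intro k hk hN hz
      by_cases hex : ∃ j, j ≠ i ∧ 0 < k j
      · -- reduce at j ≠ i
        obtain ⟨j, hji, hkj⟩ := hex
        set k' : Fin n → ℤ := k + -(ee j) with hk'
        have hadm' : Admissible i k' := by
          constructor
          · have h1 : k' i = k i := by simp [hk', ee, Ne.symm hji]
            have h2 := hk.1
            omega
          · intro m hm
            by_cases hmj : m = j
            · subst hmj
              have : k' m = k m + -1 := by simp [hk', ee]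
              omega
            · have : k' m = k m := by simp [hk', ee, hmj]
              have := hk.2 m hm
              omega
        have hz' : ∀ f, T i k' f = 0 := by
          intro f
          have H := hbr i j k (-(ee j)) hk (adm_neg_ee j) f
          rw [hz f, hz (T j (-(ee j)) f), map_zero] at H
          have hej : ((-(ee j)) i : ℤ) = 0 := by simp [ee, Ne.symm hji]
          rw [hej] at H
          have hkjc : ((k j : ℂ)) ≠ 0 := by exact_mod_cast hkj.ne'
          have H2 : ((k j : ℂ)) • T i (k + -(ee j)) f = 0 := by
            simpa using H.symm
          have := smul_eq_zero.mp H2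
          tauto
        -- measure decreases
        have hsum' : ∑ m, k' m = (∑ m, k m) + -1 := by
          simp [hk', Finset.sum_add_distrib, sum_ee]
        have hge' : -1 ≤ ∑ m, k' m := sum_ge hadm'
        have : (1 + ∑ m, k' m).toNat < N := by omega
        exact IH _ this k' hadm' le_rfl hz'
      · push_neg at hex
        have hno : ∀ j, j ≠ i → k j = 0 := by
          intro j hj
          have := hk.2 j hj
          have := hex j hj
          omega
        rcases lt_trichotomy (k i) 0 with hki | hki | hki
        · -- k i = -1, so k + ee i = 0
          have hki1 : k i = -1 := by have := hk.1; omega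
          have hke : k + ee i = 0 := by
            funext m
            by_cases hm : m = i
            · subst hm; simp [ee, hki1]
            · simp [ee, hm, hno m hm]
          have H := hbr i i k (ee i) hk (adm_ee i) 1
          rw [hz (T i (ee i) 1), hz 1, map_zero, hke, h0 i 1, mul_one] at H
          have hee : ((ee i i : ℤ) : ℂ) = 1 := by simp [ee]
          rw [hee, hki1] at H
          have hx : (X i : MvPolynomial (Fin n) ℂ) = 0 := by
            push_cast at H
            simp only [one_smul, neg_smul, neg_neg, sub_neg_eq_add, sub_self] at H
            have := H.symm
            rwa [add_self_eq_zero] at this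
          exact MvPolynomial.X_ne_zero i hx
        · -- k = 0
          have hk0 : k = 0 := by
            funext m
            by_cases hm : m = i
            · subst hm; exact hki
            · exact hno m hm
          have := hz 1
          rw [hk0, h0 i 1, mul_one] at this
          exact MvPolynomial.X_ne_zero i this
        · -- reduce at i
          set k' : Fin n → ℤ := k + -(ee i) with hk'
          have hadm' : Admissible i k' := by
            constructor
            · have : k' i = k i + -1 := by simp [hk', ee]
              omega
            · intro m hm
              have : k' m = k m := by simp [hk', ee, hm]
              have := hk.2 m hm
              omega
          have hz' : ∀ f, T i k' f = 0 := by
            intro f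
            have H := hbr i i k (-(ee i)) hk (adm_neg_ee i) f
            rw [hz f, hz (T i (-(ee i)) f), map_zero] at H
            have hej : ((-(ee i)) i : ℤ) = -1 := by simp [ee]
            rw [hej] at H
            have H2 : ((-1 : ℤ) - k i : ℂ) • T i (k + -(ee i)) f = 0 := by
              push_cast
              push_cast at H
              rw [sub_smul]
              linear_combination -H
            have hne : ((-1 : ℤ) - k i : ℂ) ≠ 0 := by
              have : ((-1 : ℤ) - k i) ≠ 0 := by omega
              exact_mod_cast this
            have := smul_eq_zero.mp H2
            tauto
          have hsum' : ∑ m, k' m = (∑ m, k m) + -1 := by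
            simp [hk', Finset.sum_add_distrib, sum_ee]
          have hge' : -1 ≤ ∑ m, k' m := sum_ge hadm'
          have : (1 + ∑ m, k' m).toNat < N := by omega
          exact IH _ this k' hadm' le_rfl hz'
  -- main theorem
  intro i k hk hk0 h1
  have hop : ∀ f, T i k f = 0 := by
    intro f
    induction f using MvPolynomial.induction_on with
    | C a =>
        have hc : (MvPolynomial.C a : MvPolynomial (Fin n) ℂ) = a • 1 := by
          rw [smul_eq_C_mul, mul_one]
        rw [hc, map_smul, h1, smul_zero]
    | add p q hp hq => rw [map_add, hp, hq, add_zero]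
    | mul_X p j hp =>
        have H := hbr j i 0 k (adm_zero j) hk p
        rw [zero_add, hp, map_zero, h0 j p] at H
        have h00 : (((0 : Fin n → ℤ) i : ℤ) : ℂ) = 0 := by simp
        rw [h00, smul_zero, zero_smul, sub_zero, zero_sub, neg_eq_zero] at H
        rw [mul_comm]
        exact H
  exact main i _ k hk le_rfl hop
end

section
/- Suppose M = ℂ[d_0]v is a W_1^+-module free of rank 1 over ℂ[d_0], with d_1·v = λ(d_0 - a)v and d_{-1}·v = λ^{-1}(d_0 + a)v for some λ ∈ ℂ*, a ∈ ℂ. If d_2·v = f_2(d_0)v, then necessarily f_2(d_0) = λ^2(d_0 - 2a), i.e. d_2·v = λ^2(d_0 - 2a)v. -/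
open Polynomial

/-!
Since `[d_0, d_k] = k d_k` and `d_0` acts by multiplication by `X`, each `d_k` satisfies
`d_k (X f) = (X - k) d_k f`, so `d_k f = f(X - k) · d_k 1`. Applied to `v = 1`, the relation
`[d_{-1}, d_2] = 3 d_1` becomes a first-order difference equation for `p = d_2 · 1`; the
difference `q = p - λ²(X - 2a)` solves its homogeneous part, which forces `q` to vanish at
`n + 3 - a` for every `n : ℕ`, hence `q = 0`.
-/

namespace Polynomial

variable {R : Type*} [CommRing R]

theorem apply_eq_comp_sub_C_mul_apply_one (T : R[X] →ₗ[R] R[X]) (c : R)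
    (hT : ∀ f, T (X * f) = (X - C c) * T f) (f : R[X]) :
    T f = f.comp (X - C c) * T 1 := by
  induction f using Polynomial.induction_on with
  | C b => rw [← mul_one (C b), ← smul_eq_C_mul, map_smul, smul_comp, one_comp, smul_mul_assoc,
      one_mul]
  | add f g hf hg => rw [map_add, hf, hg, add_comp, add_mul]
  | monomial n b ih =>
    rw [pow_succ, ← mul_assoc, mul_comm, hT, ih]
    simp only [mul_comp, X_comp]
    ring

theorem eq_zero_of_comp_add_one_mul_eq [IsDomain R] [CharZero R] {q : R[X]} {a : R}
    (hq : q.comp (X + 1) * (X + C a) = (X + C a - 2) * q) : q = 0 := by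
  have heval (x : R) : q.eval (x + 1) * (x + a) = (x + a - 2) * q.eval x := by
    simpa [eval_comp] using congrArg (eval x) hq
  have hroot (n : ℕ) : q.eval ((n : R) + 3 - a) = 0 := by
    induction n with
    | zero =>
      have h := heval (2 - a)
      rw [show (2 - a + 1 : R) = 3 - a by ring, show (2 - a + a : R) = 2 by ring,
        sub_self, zero_mul] at h
      rw [Nat.cast_zero, zero_add]
      exact (mul_eq_zero.mp h).resolve_right two_ne_zero
    | succ k ih =>
      have h := heval ((k : R) + 3 - a)
      rw [ih, mul_zero, show (k : R) + 3 - a + a = ((k + 3 : ℕ) : R) by push_cast; ring] at h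
      push_cast at h ⊢
      rw [show (k : R) + 1 + 3 - a = k + 3 - a + 1 by ring]
      exact (mul_eq_zero.mp h).resolve_right (by exact_mod_cast Nat.succ_ne_zero (k + 2))
  refine eq_zero_of_infinite_isRoot q
    (Set.Infinite.mono (s := Set.range fun n : ℕ => (n : R) + 3 - a) ?_ ?_)
  · rintro _ ⟨n, rfl⟩
    exact hroot n
  · refine Set.infinite_range_of_injective fun m n h => ?_
    exact_mod_cast (show (m : R) = n by linear_combination h)

end Polynomial

section WittAction

variable {R : Type*} [CommRing R] {D : ℤ → R[X] →ₗ[R] R[X]}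

theorem apply_X_mul_of_bracket (h0 : ∀ f, D 0 f = X * f)
    (hbr : ∀ i j : ℤ, -1 ≤ i → -1 ≤ j → ∀ f,
      D i (D j f) - D j (D i f) = ((j : R) - (i : R)) • D (i + j) f)
    {i : ℤ} (hi : -1 ≤ i) (f : R[X]) :
    D i (X * f) = (X - C (i : R)) * D i f := by
  have h := hbr i 0 hi (by norm_num) f
  rw [h0, h0, add_zero, Int.cast_zero, zero_sub, neg_smul, smul_eq_C_mul] at h
  linear_combination h

theorem apply_eq_comp_mul_of_bracket (h0 : ∀ f, D 0 f = X * f)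
    (hbr : ∀ i j : ℤ, -1 ≤ i → -1 ≤ j → ∀ f,
      D i (D j f) - D j (D i f) = ((j : R) - (i : R)) • D (i + j) f)
    {i : ℤ} (hi : -1 ≤ i) (f : R[X]) :
    D i f = f.comp (X - C (i : R)) * D i 1 :=
  apply_eq_comp_sub_C_mul_apply_one _ _ (apply_X_mul_of_bracket h0 hbr hi) f

end WittAction

/-- for a `W_1^+`-module `M = ℂ[d_0]v` free of rank 1 over `ℂ[d_0]`
(with `d_0` acting by multiplication), if `d_1·v = λ(d_0-a)v` and
`d_{-1}·v = λ⁻¹(d_0+a)v`, then `d_2·v = λ²(d_0-2a)v`. -/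
theorem d_two_action_case_one (l a : ℂ) (hl : l ≠ 0)
    (D : ℤ → Polynomial ℂ →ₗ[ℂ] Polynomial ℂ)
    (h0 : ∀ f : Polynomial ℂ, D 0 f = X * f)
    (hbr : ∀ i j : ℤ, -1 ≤ i → -1 ≤ j → ∀ f : Polynomial ℂ,
      D i (D j f) - D j (D i f) = ((j : ℂ) - (i : ℂ)) • D (i + j) f)
    (h1 : D 1 1 = l • (X - C a))
    (hm1 : D (-1) 1 = l⁻¹ • (X + C a)) :
    D 2 1 = l ^ 2 • (X - C (2 * a)) := by
  set p := D 2 1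
  have hll : C l * C l⁻¹ = (1 : ℂ[X]) := by rw [← C_mul, mul_inv_cancel₀ hl, C_1]
  have hdiff : p.comp (X + 1) * (X + C a) - (X + C a - 2) * p = C (3 * l ^ 2) * (X - C a) := by
    have h := hbr (-1) 2 (le_refl _) (by norm_num) 1
    rw [apply_eq_comp_mul_of_bracket h0 hbr (le_refl _) p,
      apply_eq_comp_mul_of_bracket h0 hbr (by norm_num) (D (-1) 1), hm1,
      show (-1 : ℤ) + 2 = 1 by norm_num, h1] at h
    simp only [smul_eq_C_mul, mul_comp, C_comp, add_comp, X_comp, Int.cast_neg, Int.cast_one,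
      Int.cast_ofNat, C_neg, C_1, sub_neg_eq_add, map_ofNat C, C_add] at h
    simp only [C_mul, C_pow, map_ofNat C]
    linear_combination C l * h - (p.comp (X + 1) * (X + C a) - (X + C a - 2) * p) * hll
  have hq : p - C (l ^ 2) * (X - C (2 * a)) = 0 := by
    refine eq_zero_of_comp_add_one_mul_eq (a := a) ?_
    simp only [sub_comp, mul_comp, C_comp, X_comp] at hdiff ⊢
    simp only [C_mul, C_pow, map_ofNat C] at hdiff ⊢
    linear_combination hdiff
  rw [smul_eq_C_mul]
  linear_combination hq
end

section
/- There is no polynomial f_2 ∈ ℂ[x] and λ ∈ ℂ*, a ∈ ℂ satisfying the identity 3λ² = (x - a)(x + a + 1) f_2(x+1) - (x - a - 2)(x + a - 1) f_2(x) in ℂ[x]. -/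
open Polynomial

private lemma comp_X_add_one_coeff (f : Polynomial ℂ) (m : ℕ) (hf : f.natDegree = m + 1) :
    (f.comp (X + 1)).coeff m = f.coeff m + (m + 1) * f.coeff (m + 1) := by
  have h1 : (X + 1 : Polynomial ℂ) = X + C 1 := by rw [C_1]
  rw [h1, ← taylor_apply, taylor_coeff]
  have hd : (hasseDeriv m f).natDegree < 2 := by
    have := natDegree_hasseDeriv_le f m
    omega
  rw [eval_eq_sum_range' hd]
  simp only [Finset.sum_range_succ, Finset.sum_range_zero, hasseDeriv_coeff, one_pow, mul_one,
    zero_add, Nat.choose_self, Nat.cast_one, one_mul]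
  rw [add_comm 1 m, Nat.choose_succ_self_right]
  push_cast
  ring

private lemma comp_X_add_one_natDegree (f : Polynomial ℂ) :
    (f.comp (X + 1)).natDegree = f.natDegree := by
  have h1 : (X + 1 : Polynomial ℂ) = X + C 1 := by rw [C_1]
  rw [h1, natDegree_comp, natDegree_X_add_C, mul_one]

private lemma comp_X_add_one_leadingCoeff (f : Polynomial ℂ) :
    (f.comp (X + 1)).coeff f.natDegree = f.leadingCoeff := by
  have h1 : (X + 1 : Polynomial ℂ) = X + C 1 := by rw [C_1]
  have hd : (X + C (1:ℂ)).natDegree ≠ 0 := by rw [natDegree_X_add_C]; exact one_ne_zero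
  have := leadingCoeff_comp (p := f) hd
  rw [← h1] at this
  rw [← comp_X_add_one_natDegree f] at this ⊢
  rw [coeff_natDegree, this, h1, Monic.leadingCoeff (monic_X_add_C (1:ℂ)), one_pow, mul_one]

/-- there is no polynomial `f₂ ∈ ℂ[x]`, `λ ∈ ℂ*`, `a ∈ ℂ` with
`3λ² = (x-a)(x+a+1)f₂(x+1) - (x-a-2)(x+a-1)f₂(x)`. -/
theorem no_solution_case_two :
    ¬ ∃ (f2 : Polynomial ℂ) (l a : ℂ), l ≠ 0 ∧
      C (3 * l ^ 2) =
        (X - C a) * (X + C a + 1) * f2.comp (X + 1)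
          - (X - C a - 2) * (X + C a - 1) * f2 := by
  rintro ⟨f2, l, a, hl, h⟩
  -- f2 ≠ 0
  have hf2 : f2 ≠ 0 := by
    rintro rfl
    simp only [zero_comp, mul_zero, sub_zero] at h
    have h3 : 3 * l ^ 2 = 0 := C_eq_zero.mp h
    have hsq : l ^ 2 = 0 := by linear_combination h3 / 3
    exact hl (pow_eq_zero_iff (two_ne_zero) |>.mp hsq)
  have hc : f2.leadingCoeff ≠ 0 := leadingCoeff_ne_zero.mpr hf2
  -- rewrite the quadratic factors
  have hq1 : (X - C a) * (X + C a + 1) = X ^ 2 + X - C (a ^ 2 + a) := by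
    rw [map_add, map_pow]; ring
  have hq2 : (X - C a - 2) * (X + C a - 1)
      = X ^ 2 - 3 * X - C (a ^ 2 + a - 2) := by
    simp only [map_sub, map_add, map_pow, map_ofNat]
    ring
  rw [hq1, hq2] at h
  set g := f2.comp (X + 1) with hg
  rcases Nat.eq_zero_or_eq_succ_pred f2.natDegree with h0 | hsucc
  · -- degree 0 case: f2 is a constant
    obtain ⟨k, hk⟩ : ∃ k : ℂ, f2 = C k := ⟨f2.coeff 0, f2.eq_C_of_natDegree_eq_zero h0⟩
    have hgC : g = C k := by rw [hg, hk, C_comp]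
    rw [hk, hgC] at h
    have hrw : (X ^ 2 + X - C (a ^ 2 + a)) * C k
        - (X ^ 2 - 3 * X - C (a ^ 2 + a - 2)) * C k
        = C (4 * k) * X + C (-(2 * k)) := by
      simp only [map_add, map_sub, map_mul, map_neg, map_pow, map_ofNat]
      ring
    rw [hrw] at h
    have h1 := congrArg (fun p => coeff p 1) h
    simp only [coeff_C, coeff_add, coeff_C_mul, coeff_X_one, mul_one] at h1
    norm_num at h1
    -- h1 : k-related equation; deduce k = 0
    have hk0 : k = 0 := by linear_combination h1
    rw [hk0, map_zero] at hk
    exact hf2 hk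
  · -- degree m+1 case
    set m := f2.natDegree - 1 with hm
    have hdeg : f2.natDegree = m + 1 := hsucc
    set c := f2.leadingCoeff with hcdef
    have hgm : g.coeff m = f2.coeff m + (m + 1) * f2.coeff (m + 1) :=
      comp_X_add_one_coeff f2 m hdeg
    have hftop : f2.coeff (m + 1) = c := by rw [← hdeg]; exact coeff_natDegree
    have hgtop : g.coeff (m + 1) = c := by
      have := comp_X_add_one_leadingCoeff f2
      rwa [hdeg] at this
    have hg2 : g.coeff (m + 2) = 0 := by
      apply coeff_eq_zero_of_natDegree_lt
      rw [hg, comp_X_add_one_natDegree, hdeg]; omega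
    have hf22 : f2.coeff (m + 2) = 0 := by
      apply coeff_eq_zero_of_natDegree_lt; omega
    -- expand the products
    have e1 : (X ^ 2 + X - C (a ^ 2 + a)) * g
        = X ^ 2 * g + X * g - C (a ^ 2 + a) * g := by ring
    have e2 : (X ^ 2 - 3 * X - C (a ^ 2 + a - 2)) * f2
        = X ^ 2 * f2 - C (3:ℂ) * (X * f2) - C (a ^ 2 + a - 2) * f2 := by
      simp only [map_ofNat]; ring
    rw [e1, e2] at h
    have h2 := congrArg (fun p => coeff p (m + 2)) h
    have hxg : (X ^ 2 * g).coeff (m + 2) = g.coeff m := coeff_X_pow_mul g 2 m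
    have hxf : (X ^ 2 * f2).coeff (m + 2) = f2.coeff m := coeff_X_pow_mul f2 2 m
    simp only [coeff_C, coeff_sub, coeff_add, coeff_C_mul, hxg, hxf, coeff_X_mul,
      hgm, hftop, hgtop, hg2, hf22] at h2
    norm_num at h2
    -- h2 yields ((m:ℂ) + 5) * c = 0
    have hcast : ((m : ℂ) + 5) ≠ 0 := by
      have : (0:ℝ) < (m:ℝ) + 5 := by positivity
      intro hcontra
      have := congrArg Complex.re hcontra
      push_cast at this
      simp at this
      linarith
    apply hc
    have : ((m : ℂ) + 5) * c = 0 := by linear_combination -h2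
    exact (mul_eq_zero.mp this).resolve_left hcast
end

section
/- Every Virasoro module that is free of rank 1 over ℂ[d_0] (with d_0 acting by multiplication) is isomorphic to Ω(λ, a) for some λ ∈ ℂ*, a ∈ ℂ; in particular the central element C acts as 0 on such a module. -/
open Polynomial

/-!
Since `d_0` acts as `x`, the relation `[d_0, d_i] = i d_i` forces `d_i f = f(x - i) g_i` with
`g_i = d_i 1`, and `[C, d_0] = 0` forces `C f = f c`. The bracket relations then become polynomial
identities `g_j(x - i) g_i(x) - g_i(x - j) g_j(x) = (j - i) g_{i+j} + δ_{i,-j} (i³ - i)/12 c`.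
On the left the top coefficients cancel and the next one is
`lc(g_i) lc(g_j) (j deg g_i - i deg g_j)`. Reading off degrees in `[d_1, d_{-1}] = -2 d_0`, and
excluding the degrees `(0, 2)` and `(2, 0)` with `d_{±2}`, gives `g_1 = λ (x - α)`. The same
coefficient makes `[d_i, d_{∓1}]` determine `g_i` from `g_{i∓1}`, so `g_i = λ^i (x - iα)` for all
`i`, which is `Ω(λ, α - 1)`; finally `[d_2, d_{-2}]` forces `c = 0`.
-/

namespace Polynomial

variable {R : Type*} [CommRing R]

theorem nextCoeff_mul_of_leadingCoeff_mul_ne_zero {p q : R[X]}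
    (h : p.leadingCoeff * q.leadingCoeff ≠ 0) :
    (p * q).nextCoeff = p.nextCoeff * q.leadingCoeff + p.leadingCoeff * q.nextCoeff := by
  simp only [← coeff_one_reverse]
  rw [reverse_mul h, mul_coeff_one, coeff_zero_reverse, coeff_zero_reverse]
  ring

theorem nextCoeff_taylor (f : R[X]) (r : R) :
    (taylor r f).nextCoeff = f.nextCoeff + f.natDegree * r * f.leadingCoeff := by
  obtain hf | ⟨n, hn⟩ : f.natDegree = 0 ∨ ∃ n, f.natDegree = n + 1 :=
    (Nat.eq_zero_or_eq_succ_pred _).imp_right fun h => ⟨_, h⟩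
  · simp [nextCoeff, natDegree_taylor, hf]
  have hd : (hasseDeriv n f).natDegree < 2 := by
    have := natDegree_hasseDeriv_le f n
    omega
  rw [nextCoeff_of_natDegree_pos (by rw [natDegree_taylor]; omega), nextCoeff_of_natDegree_pos
    (by omega), natDegree_taylor, hn, Nat.add_sub_cancel, taylor_coeff, eval_eq_sum_range' hd,
    leadingCoeff, hn]
  simp [Finset.sum_range_succ, hasseDeriv_coeff, add_comm 1 n]
  ring

theorem comp_X_sub_C_eq_taylor (f : R[X]) (s : R) : f.comp (X - C s) = taylor (-s) f := by
  rw [taylor_apply, map_neg, sub_eq_add_neg]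

theorem natDegree_comp_X_sub_C_mul_le (s : R) (P Q : R[X]) :
    (Q.comp (X - C s) * P).natDegree ≤ P.natDegree + Q.natDegree := by
  rw [comp_X_sub_C_eq_taylor, add_comm]
  exact natDegree_mul_le_of_le (natDegree_taylor Q (-s)).le le_rfl

theorem coeff_comp_X_sub_C_mul (s : R) (P Q : R[X]) :
    (Q.comp (X - C s) * P).coeff (P.natDegree + Q.natDegree) = P.leadingCoeff * Q.leadingCoeff := by
  rw [comp_X_sub_C_eq_taylor, add_comm, coeff_mul_add_eq_of_natDegree_le
    (natDegree_taylor Q (-s)).le le_rfl, ← natDegree_taylor Q (-s), coeff_natDegree,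
    leadingCoeff_taylor, coeff_natDegree, mul_comm]

/-- If `d_i f = f(x - i) g_i`, then `[d_i, d_j] 1 = shiftBracket i j g_i g_j`. -/
noncomputable def shiftBracket (s t : R) (P Q : R[X]) : R[X] :=
  Q.comp (X - C s) * P - P.comp (X - C t) * Q

variable (s t : R) (P Q : R[X])

theorem shiftBracket_sub_left (P' : R[X]) :
    shiftBracket s t (P - P') Q = shiftBracket s t P Q - shiftBracket s t P' Q := by
  simp only [shiftBracket, sub_comp]
  ring

theorem natDegree_shiftBracket_le :
    (shiftBracket s t P Q).natDegree ≤ P.natDegree + Q.natDegree - 1 := by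
  refine natDegree_le_pred ((natDegree_sub_le _ _).trans (max_le
    (natDegree_comp_X_sub_C_mul_le s P Q) (add_comm P.natDegree _ ▸
      natDegree_comp_X_sub_C_mul_le t Q P))) ?_
  rw [shiftBracket, coeff_sub, coeff_comp_X_sub_C_mul, add_comm, coeff_comp_X_sub_C_mul, mul_comm,
    sub_self]

theorem coeff_shiftBracket [IsDomain R] :
    (shiftBracket s t P Q).coeff (P.natDegree + Q.natDegree - 1)
      = P.leadingCoeff * Q.leadingCoeff * (t * P.natDegree - s * Q.natDegree) := by
  rcases eq_or_ne P 0 with rfl | hP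
  · simp [shiftBracket]
  rcases eq_or_ne Q 0 with rfl | hQ
  · simp [shiftBracket]
  obtain hmn | hmn := Nat.eq_zero_or_pos (P.natDegree + Q.natDegree)
  · rw [eq_C_of_natDegree_eq_zero (show P.natDegree = 0 by omega),
      eq_C_of_natDegree_eq_zero (show Q.natDegree = 0 by omega)]
    simp [shiftBracket, mul_comm]
  have hlc : P.leadingCoeff * Q.leadingCoeff ≠ 0 := by simp [hP, hQ]
  have hF : (taylor (-s) Q * P).natDegree = P.natDegree + Q.natDegree := by
    rw [natDegree_mul (by simpa using hQ) hP, natDegree_taylor, add_comm]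
  have hG : (taylor (-t) P * Q).natDegree = P.natDegree + Q.natDegree := by
    rw [natDegree_mul (by simpa using hP) hQ, natDegree_taylor]
  rw [shiftBracket, comp_X_sub_C_eq_taylor, comp_X_sub_C_eq_taylor, coeff_sub,
    ← hF, ← nextCoeff_of_natDegree_pos (hF ▸ hmn), hF, ← hG,
    ← nextCoeff_of_natDegree_pos (hG ▸ hmn),
    nextCoeff_mul_of_leadingCoeff_mul_ne_zero (by simpa [mul_comm] using hlc),
    nextCoeff_mul_of_leadingCoeff_mul_ne_zero (by simpa using hlc),
    nextCoeff_taylor, nextCoeff_taylor, leadingCoeff_taylor, leadingCoeff_taylor]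
  ring

theorem natDegree_shiftBracket [IsDomain R] (hP : P ≠ 0) (hQ : Q ≠ 0)
    (h : t * P.natDegree ≠ s * Q.natDegree) :
    (shiftBracket s t P Q).natDegree + 1 = P.natDegree + Q.natDegree := by
  have hpos : 0 < P.natDegree + Q.natDegree := by
    by_contra h0
    exact h (by simp [show P.natDegree = 0 by omega, show Q.natDegree = 0 by omega])
  have hcoeff : (shiftBracket s t P Q).coeff (P.natDegree + Q.natDegree - 1) ≠ 0 := by
    rw [coeff_shiftBracket]
    simp [hP, hQ, sub_ne_zero.2 h]
  have := le_natDegree_of_ne_zero hcoeff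
  have := natDegree_shiftBracket_le s t P Q
  omega

theorem eq_of_shiftBracket_eq [IsDomain R] {P P' : R[X]} (hQ : Q ≠ 0)
    (hres : ∀ d : ℕ, t * d ≠ s * Q.natDegree)
    (h : shiftBracket s t P Q = shiftBracket s t P' Q) : P = P' := by
  by_contra hne
  have := coeff_shiftBracket s t (P - P') Q
  rw [shiftBracket_sub_left, h, sub_self, coeff_zero, eq_comm] at this
  simp [sub_ne_zero.2 hne, hQ, sub_ne_zero.2 (hres _)] at this

end Polynomial

section Cocycle

variable {K : Type*} [Field K]

def virasoroCentral (i j : ℤ) : K :=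
  if i + j = 0 then ((i : K) ^ 3 - i) / 12 else 0

theorem virasoroCentral_eq_zero {i j : ℤ} (h : i + j ≠ 0 ∨ i = 1 ∨ i = -1) :
    virasoroCentral i j = (0 : K) := by
  unfold virasoroCentral
  split_ifs
  · rcases h with h | rfl | rfl <;> first | contradiction | norm_num
  · rfl

/-- The relations `[d_i, d_j] = (j - i) d_{i+j} + δ_{i,-j} (i³ - i)/12 C` on the generator `1`,
for `d_i f = f(x - i) g_i` and `C f = f c`. -/
def IsVirasoroCocycle (g : ℤ → K[X]) (c : K[X]) : Prop :=
  ∀ i j : ℤ, shiftBracket (i : K) j (g i) (g j)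
    = ((j : K) - i) • g (i + j) + (virasoroCentral i j : K) • c

/-- The `g_i = d_i 1` of `Ω(l, α - 1)`, cf. `omegaAct`. -/
noncomputable def omegaCocycle (l α : K) (i : ℤ) : K[X] :=
  C (l ^ i) * (X - C (i * α))

variable {l α : K}

theorem natDegree_omegaCocycle (hl : l ≠ 0) (i : ℤ) : (omegaCocycle l α i).natDegree = 1 := by
  rw [omegaCocycle, natDegree_C_mul (zpow_ne_zero i hl), natDegree_X_sub_C]

theorem omegaCocycle_ne_zero (hl : l ≠ 0) (i : ℤ) : omegaCocycle l α i ≠ 0 :=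
  ne_zero_of_natDegree_gt (n := 0) (by rw [natDegree_omegaCocycle hl]; exact one_pos)

theorem isVirasoroCocycle_omegaCocycle (hl : l ≠ 0) :
    IsVirasoroCocycle (omegaCocycle l α) 0 := by
  intro i j
  simp only [shiftBracket, omegaCocycle, smul_zero, add_zero, mul_comp, C_comp, sub_comp, X_comp,
    zpow_add₀ hl, smul_eq_C_mul, map_mul, map_sub, map_add, Int.cast_add]
  ring

namespace IsVirasoroCocycle

variable [CharZero K] {g : ℤ → K[X]} {c : K[X]} {i j k : ℤ}

theorem apply_ne_zero (hg : IsVirasoroCocycle g c) (hk : i + j = k)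
    (hcen : virasoroCentral i j = (0 : K)) (hij : i ≠ j) (h : g k ≠ 0) : g i ≠ 0 ∧ g j ≠ 0 := by
  have e := hg i j
  rw [hk, hcen, zero_smul, add_zero] at e
  have hji : (j : K) - i ≠ 0 := sub_ne_zero.2 (by exact_mod_cast hij.symm)
  constructor <;> intro h0 <;> simp [shiftBracket, h0, hji, h, eq_comm (a := (0 : K[X]))] at e

theorem natDegree_add_one (hg : IsVirasoroCocycle g c) (hk : i + j = k)
    (hcen : virasoroCentral i j = (0 : K)) (hij : i ≠ j) (h : g k ≠ 0)
    (hres : j * (g i).natDegree ≠ i * (g j).natDegree) :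
    (g k).natDegree + 1 = (g i).natDegree + (g j).natDegree := by
  obtain ⟨hi, hj⟩ := hg.apply_ne_zero hk hcen hij h
  have e := hg i j
  rw [hk, hcen, zero_smul, add_zero] at e
  rw [← natDegree_smul (g k) (sub_ne_zero.2 (by exact_mod_cast hij.symm) : (j : K) - i ≠ 0), ← e,
    natDegree_shiftBracket _ _ _ _ hi hj (by exact_mod_cast hres)]

theorem eq_omegaCocycle_of_eq (hg : IsVirasoroCocycle g c) (hl : l ≠ 0) (hk : i + j = k)
    (hcen : virasoroCentral i j = (0 : K)) (hj : g j = omegaCocycle l α j)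
    (hgk : g k = omegaCocycle l α k) (hres : ∀ d : ℕ, j * d ≠ i) :
    g i = omegaCocycle l α i := by
  refine eq_of_shiftBracket_eq (i : K) j _ (omegaCocycle_ne_zero (α := α) hl j) ?_ ?_
  · intro d
    rw [natDegree_omegaCocycle hl, Nat.cast_one, mul_one]
    exact_mod_cast hres d
  · have e := hg i j
    have e' := isVirasoroCocycle_omegaCocycle (α := α) hl i j
    rw [hk, hcen, zero_smul, add_zero, hj, hgk] at e
    rw [e, e', hk, smul_zero, add_zero]

theorem natDegree_apply_one (hg : IsVirasoroCocycle g c) (h0 : g 0 = X) :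
    (g 1).natDegree = 1 := by
  have hX : g 0 ≠ 0 := h0 ▸ X_ne_zero
  obtain ⟨h1, hm1⟩ := hg.apply_ne_zero (i := 1) (j := -1) (by norm_num)
    (virasoroCentral_eq_zero (by norm_num)) (by norm_num) hX
  have hnonconst : ¬((g 1).natDegree = 0 ∧ (g (-1)).natDegree = 0) := by
    rintro ⟨hm, hn⟩
    have e := hg 1 (-1)
    rw [eq_C_of_natDegree_eq_zero hm, eq_C_of_natDegree_eq_zero hn] at e
    norm_num [shiftBracket, mul_comm, virasoroCentral, h0] at e
  have hsum := hg.natDegree_add_one (i := 1) (j := -1) (by norm_num)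
    (virasoroCentral_eq_zero (by norm_num)) (by norm_num) hX (by omega)
  rw [h0, natDegree_X] at hsum
  -- The degree distributions `(0, 2)` and `(2, 0)` contradict `[d_2, d_{-1}]` and `[d_{-2}, d_1]`.
  have h02 : (g 1).natDegree ≠ 0 := fun hm => by
    have := hg.natDegree_add_one (i := 2) (j := -1) (by norm_num)
      (virasoroCentral_eq_zero (by norm_num)) (by norm_num) h1 (by omega)
    omega
  have h20 : (g 1).natDegree ≠ 2 := fun hm => by
    have := hg.natDegree_add_one (i := -2) (j := 1) (by norm_num)
      (virasoroCentral_eq_zero (by norm_num)) (by norm_num) hm1 (by omega)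
    omega
  omega

theorem exists_eq_omegaCocycle (hg : IsVirasoroCocycle g c) (h0 : g 0 = X) :
    ∃ l α : K, l ≠ 0 ∧ g = omegaCocycle l α := by
  have hdeg := hg.natDegree_apply_one h0
  have hl : (g 1).leadingCoeff ≠ 0 :=
    leadingCoeff_ne_zero.2 (ne_zero_of_natDegree_gt (n := 0) (by omega))
  set l := (g 1).leadingCoeff
  refine ⟨l, -(g 1).coeff 0 / l, hl, ?_⟩
  have h1 : g 1 = omegaCocycle l (-(g 1).coeff 0 / l) 1 := by
    have hc1 : (g 1).coeff 1 = l := hdeg ▸ coeff_natDegree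
    conv_lhs => rw [eq_X_add_C_of_natDegree_le_one hdeg.le, hc1]
    rw [omegaCocycle, Int.cast_one, one_mul, zpow_one, mul_sub, ← C_mul, mul_div_cancel₀ _ hl,
      map_neg, sub_neg_eq_add]
  have hm1 : g (-1) = omegaCocycle l (-(g 1).coeff 0 / l) (-1) :=
    hg.eq_omegaCocycle_of_eq hl (k := 0) (by norm_num) (virasoroCentral_eq_zero (by norm_num)) h1
      (by simp [h0, omegaCocycle]) fun d => by omega
  funext i
  induction i using Int.induction_on with
  | zero => simp [h0, omegaCocycle]
  | succ k ih =>
    exact hg.eq_omegaCocycle_of_eq hl (by ring) (virasoroCentral_eq_zero (by omega)) hm1 ih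
      fun d => by omega
  | pred k ih =>
    exact hg.eq_omegaCocycle_of_eq hl (by ring) (virasoroCentral_eq_zero (by omega)) h1 ih
      fun d => by omega

end IsVirasoroCocycle

theorem isVirasoroCocycle_omegaCocycle_iff [CharZero K] (hl : l ≠ 0) {c : K[X]} :
    IsVirasoroCocycle (omegaCocycle l α) c ↔ c = 0 := by
  refine ⟨fun hg => ?_, fun hc => hc ▸ isVirasoroCocycle_omegaCocycle hl⟩
  have e := hg 2 (-2)
  rw [isVirasoroCocycle_omegaCocycle hl 2 (-2)] at e
  norm_num [virasoroCentral] at e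
  exact e

end Cocycle

theorem LinearMap.apply_eq_comp_mul_apply_one {R : Type*} [CommRing R] (T : R[X] →ₗ[R] R[X])
    {s : R} (hT : ∀ f, T (X * f) = (X - C s) * T f) (f : R[X]) :
    T f = f.comp (X - C s) * T 1 := by
  induction f using Polynomial.induction_on with
  | C a => rw [C_comp, C_mul', ← map_smul, ← C_mul', mul_one]
  | add p q hp hq => rw [map_add, hp, hq, Polynomial.add_comp, add_mul]
  | monomial n a ih =>
    rw [pow_succ, ← mul_assoc, mul_comm, hT, ih]
    simp only [Polynomial.mul_comp, C_comp, X_comp, pow_comp]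
    ring

/-- every Virasoro module free of rank 1 over `ℂ[d_0]` (with `d_0`
acting by multiplication) is isomorphic to `Ω(λ,a)`; in particular the central
element `C` acts as `0`. -/
theorem classification_virasoro
    (D : ℤ → Polynomial ℂ →ₗ[ℂ] Polynomial ℂ)
    (Cop : Polynomial ℂ →ₗ[ℂ] Polynomial ℂ)
    (h0 : ∀ f : Polynomial ℂ, D 0 f = X * f)
    (hC : ∀ (i : ℤ) (f : Polynomial ℂ), Cop (D i f) = D i (Cop f))
    (hbr : ∀ (i j : ℤ) (f : Polynomial ℂ),
      D i (D j f) - D j (D i f)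
        = ((j : ℂ) - (i : ℂ)) • D (i + j) f
          + (if i + j = 0 then ((i : ℂ) ^ 3 - (i : ℂ)) / 12 else 0) • Cop f) :
    ∃ (l a : ℂ), l ≠ 0 ∧ (∀ f : Polynomial ℂ, Cop f = 0) ∧
      ∃ φ : Polynomial ℂ ≃ₗ[ℂ] Polynomial ℂ,
        ∀ (i : ℤ) (f : Polynomial ℂ), φ (D i f) = omegaAct l a i (φ f) := by
  have hD (i : ℤ) (f : ℂ[X]) : D i f = f.comp (X - C (i : ℂ)) * D i 1 := by
    refine (D i).apply_eq_comp_mul_apply_one (fun f => ?_) f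
    have hcen : (if i + 0 = 0 then ((i : ℂ) ^ 3 - i) / 12 else 0) = 0 := by
      split_ifs with hi <;> simp_all
    have := hbr i 0 f
    rw [h0, h0, hcen, zero_smul, add_zero, add_zero, Int.cast_zero, zero_sub, neg_smul,
      smul_eq_C_mul] at this
    linear_combination this
  have hCop (f : ℂ[X]) : Cop f = f * Cop 1 := by
    simpa using Cop.apply_eq_comp_mul_apply_one (s := 0) (by simpa [h0] using hC 0) f
  have hg : IsVirasoroCocycle (fun i => D i 1) (Cop 1) := fun i j => by
    have := hbr i j 1
    rwa [hD i (D j 1), hD j (D i 1)] at this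
  obtain ⟨l, α, hl, hω⟩ := hg.exists_eq_omegaCocycle (by simp [h0])
  have hc : Cop 1 = 0 := (isVirasoroCocycle_omegaCocycle_iff hl).1 (hω ▸ hg)
  refine ⟨l, α - 1, hl, fun f => by rw [hCop, hc, mul_zero], LinearEquiv.refl ℂ ℂ[X],
    fun i f => ?_⟩
  rw [LinearEquiv.refl_apply, LinearEquiv.refl_apply, hD, congrFun hω i, omegaAct, omegaCocycle,
    sub_add_cancel, smul_eq_C_mul]
  ring
end

section
/- Suppose M = ℂ[d_0]v is a Virasoro module free of rank 1 over ℂ[d_0] with d_i·v = λ^i(d_0 - i(a+1))v for all i ≥ -1 (λ ∈ ℂ*, a ∈ ℂ). Then d_{-2}·v = λ^{-2}(d_0 + 2(a+1))v and C·v = 0. -/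
open Polynomial

/-- for a Virasoro module `M = ℂ[d_0]v` free of rank 1 over `ℂ[d_0]`
with `d_i·v = λ^i(d_0 - i(a+1))v` for all `i ≥ -1`, one has
`d_{-2}·v = λ^{-2}(d_0 + 2(a+1))v` and `C·v = 0`. -/
theorem d_neg_two_and_central_charge (l a : ℂ) (hl : l ≠ 0)
    (D : ℤ → Polynomial ℂ →ₗ[ℂ] Polynomial ℂ)
    (Cop : Polynomial ℂ →ₗ[ℂ] Polynomial ℂ)
    (h0 : ∀ f : Polynomial ℂ, D 0 f = X * f)
    (hC : ∀ (i : ℤ) (f : Polynomial ℂ), Cop (D i f) = D i (Cop f))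
    (hbr : ∀ (i j : ℤ) (f : Polynomial ℂ),
      D i (D j f) - D j (D i f)
        = ((j : ℂ) - (i : ℂ)) • D (i + j) f
          + (if i + j = 0 then ((i : ℂ) ^ 3 - (i : ℂ)) / 12 else 0) • Cop f)
    (hpos : ∀ i : ℤ, -1 ≤ i → D i 1 = l ^ i • (X - C ((i : ℂ) * (a + 1)))) :
    D (-2) 1 = l ^ (-2 : ℤ) • (X + C (2 * (a + 1))) ∧ Cop 1 = 0 := by
  -- step: D i (X * f) = (X - C i) * D i f for i ≠ 0
  have hstep : ∀ (i : ℤ), i ≠ 0 → ∀ f, D i (X * f) = (X - C (i : ℂ)) * D i f := by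
    intro i hi f
    have h := hbr i 0 f
    rw [h0, h0, if_neg (by simpa using hi)] at h
    simp only [add_zero, zero_smul, zero_sub, Int.cast_zero] at h
    rw [sub_eq_iff_eq_add'] at h
    rw [h, smul_eq_C_mul, map_neg]
    ring
  -- key: D i p = p.comp (X - C i) * D i 1 for i ≠ 0
  have key : ∀ (i : ℤ), i ≠ 0 → ∀ p : Polynomial ℂ,
      D i p = p.comp (X - C (i : ℂ)) * D i 1 := by
    intro i hi p
    induction p using Polynomial.induction_on with
    | C b =>
        have e : (C b : Polynomial ℂ) = b • 1 := by simp [smul_eq_C_mul]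
        rw [e, map_smul]
        simp [smul_eq_C_mul]
    | add p q hp hq => rw [map_add, hp, hq, add_comp, add_mul]
    | monomial n b ih =>
        have e : (C b * X ^ (n + 1) : Polynomial ℂ) = X * (C b * X ^ n) := by ring
        rw [e, hstep i hi, ih]
        simp only [mul_comp, X_comp, C_comp, pow_comp]
        ring
  -- known values
  set c : ℂ := a + 1 with hc
  have h1 : D 1 1 = l • (X - C c) := by
    have := hpos 1 (by norm_num)
    simpa using this
  have hm1 : D (-1) 1 = l⁻¹ • (X + C c) := by
    have h := hpos (-1) (by norm_num)
    rw [h, zpow_neg_one]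
    congr 1
    push_cast
    rw [neg_mul, map_neg, one_mul, sub_neg_eq_add]
  have h2 : D 2 1 = (l ^ (2 : ℕ)) • (X - C (2 * c)) := by
    have h := hpos 2 (by norm_num)
    rw [h, show ((2:ℤ):ℂ) = (2:ℂ) by norm_num, show (2:ℤ) = ((2:ℕ):ℤ) from rfl,
      zpow_natCast]
  set q : Polynomial ℂ := D (-2) 1 with hqdef
  have hlu : (C l : Polynomial ℂ) * C l⁻¹ = 1 := by
    rw [← C_mul, mul_inv_cancel₀ hl, C_1]
  -- equation A from [d_1, d_{-2}]
  have eqA := hbr 1 (-2) 1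
  rw [key 1 (by norm_num) (D (-2) 1), key (-2) (by norm_num) (D 1 1), h1] at eqA
  rw [show (1:ℤ) + -2 = -1 from rfl, if_neg (show (-1:ℤ) ≠ 0 by norm_num), hm1] at eqA
  push_cast at eqA
  simp only [smul_comp, sub_comp, mul_comp, X_comp, C_comp, smul_eq_C_mul, zero_smul, add_zero,
    map_neg, map_sub] at eqA
  simp only [map_one, map_ofNat] at eqA
  have hC0 : (C l : Polynomial ℂ) ≠ 0 := fun h => hl (by simpa using h)
  have eqA' : (D (-2) 1).comp (X - 1) * (X - C c) - (X + 2 - C c) * (D (-2) 1)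
      = (-3) * (C l⁻¹ * C l⁻¹) * (X + C c) := by
    apply mul_left_cancel₀ hC0
    linear_combination eqA + 3 * C l⁻¹ * (X + C c) * hlu
  -- r := q - target satisfies a homogeneous functional equation
  set r : Polynomial ℂ := q - (C l⁻¹ * C l⁻¹) * (X + 2 * C c) with hrdef
  have hr : r.comp (X - 1) * (X - C c) = (X + C (2 - c)) * r := by
    rw [hrdef, hqdef]
    simp only [sub_comp, mul_comp, add_comp, X_comp, C_comp, one_comp, ofNat_comp,
      map_sub, map_ofNat]
    linear_combination eqA'
  -- evaluate the functional equation
  have heval : ∀ x : ℂ, r.eval (x - 1) * (x - c) = (x + (2 - c)) * r.eval x := by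
    intro x
    have h := congrArg (eval x) hr
    simpa [eval_comp] using h
  have hroot : ∀ n : ℕ, r.eval (c + n) = 0 := by
    intro n
    induction n with
    | zero =>
        have h := heval c
        rw [sub_self, mul_zero] at h
        have h2 : (2 : ℂ) * r.eval (c + (0 : ℕ)) = 0 := by
          push_cast
          rw [add_zero]
          linear_combination -h
        exact (mul_eq_zero.mp h2).resolve_left two_ne_zero
    | succ n ih =>
        have h := heval (c + (n : ℂ) + 1)
        rw [show c + (n : ℂ) + 1 - 1 = c + (n : ℂ) by ring] at h
        push_cast at ih
        have h2 : ((n : ℂ) + 3) * r.eval (c + (n : ℂ) + 1) = 0 := by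
          linear_combination -h + (c + (n : ℂ) + 1 - c) * ih
        have h3 : ((n : ℂ) + 3) ≠ 0 := by
          have : ((n : ℂ) + 3) = ((n + 3 : ℕ) : ℂ) := by push_cast; ring
          rw [this]
          exact Nat.cast_ne_zero.mpr (by omega)
        have h4 := (mul_eq_zero.mp h2).resolve_left h3
        push_cast
        rw [show c + ((n : ℂ) + 1) = c + (n : ℂ) + 1 by ring]
        exact h4
  have hr0 : r = 0 := by
    apply Polynomial.eq_zero_of_infinite_isRoot
    refine Set.Infinite.mono ?_
      (Set.infinite_range_of_injective (f := fun n : ℕ => c + (n : ℂ)) ?_)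
    · rintro x ⟨n, rfl⟩
      exact hroot n
    · intro m n h
      exact Nat.cast_injective (add_left_cancel h)
  have hq2 : D (-2) 1 = C l⁻¹ * C l⁻¹ * (X + 2 * C c) := by
    have h := hr0
    rw [hrdef] at h
    exact sub_eq_zero.mp h
  constructor
  · rw [hqdef, hq2, smul_eq_C_mul]
    have e1 : (C (l ^ (-2 : ℤ)) : Polynomial ℂ) = C l⁻¹ * C l⁻¹ := by
      rw [← C_mul]
      congr 1
      rw [show (-2 : ℤ) = -((2 : ℕ) : ℤ) from rfl, zpow_neg, zpow_natCast, sq, mul_inv]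
    have e2 : (C (2 * c) : Polynomial ℂ) = 2 * C c := by
      rw [map_mul, map_ofNat]
    rw [e1, e2]
  · have eqB := hbr 2 (-2) 1
    rw [key 2 (by norm_num) (D (-2) 1), key (-2) (by norm_num) (D 2 1), h2] at eqB
    rw [show (2 : ℤ) + -2 = 0 from rfl, if_pos rfl, h0] at eqB
    rw [hq2] at eqB
    push_cast at eqB
    simp only [smul_comp, sub_comp, mul_comp, add_comp, X_comp, C_comp, ofNat_comp,
      pow_comp, smul_eq_C_mul, mul_one, map_pow, map_neg, map_sub, map_mul, map_ofNat,
      Nat.cast_ofNat] at eqB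
    have h5 : (C (((2 : ℂ) ^ 3 - 2) / 12) : Polynomial ℂ) * Cop 1 = 0 := by
      linear_combination -eqB - 4 * X * (C l * C l⁻¹ + 1) * hlu
    have h6 : (C (((2 : ℂ) ^ 3 - 2) / 12) : Polynomial ℂ) ≠ 0 := by
      intro h
      have : (((2 : ℂ) ^ 3 - 2) / 12) = 0 := by simpa using h
      norm_num at this
    exact (mul_eq_zero.mp h5).resolve_left h6
end

section
/- For n ≥ 1, Λ_n ∈ (ℂ*)^n, a ∈ ℂ, and S ⊆ {1,...,n}, the action t^k ∂_i · f(x_1,...,x_n) = Λ_n^k f(x_1 - k_1, ..., x_n - k_n) φ_{S,a}(k, i) defines a W_n^+-module structure on ℂ[x_1,...,x_n]. -/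
open MvPolynomial

/-- The polynomial `φ_{S,a}(k,i)`. -/
noncomputable def phiSA {n : ℕ} (a : ℂ) (S : Finset (Fin n)) (k : Fin n → ℤ)
    (i : Fin n) : MvPolynomial (Fin n) ℂ :=
  if k i = -1 ∧ i ∈ S then
    ∏ q ∈ S.erase i, ∏ p ∈ Finset.range (k q).toNat, (X q + C a - C (p : ℂ))
  else
    (X i - C ((k i : ℂ) * (a + 1))) *
      ∏ q ∈ S, ∏ p ∈ Finset.range (k q).toNat, (X q + C a - C (p : ℂ))

/-- The action of `t^k ∂_i` on `Ω(Λ_n, a, S) = ℂ[x_1,...,x_n]`. -/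
noncomputable def omegaSAct {n : ℕ} (Λ : Fin n → ℂ) (a : ℂ) (S : Finset (Fin n))
    (i : Fin n) (k : Fin n → ℤ) (f : MvPolynomial (Fin n) ℂ) :
    MvPolynomial (Fin n) ℂ :=
  (∏ j, Λ j ^ (k j)) •
    ((aeval (fun j => X j - C ((k j : ℂ))) f) * phiSA a S k i)

noncomputable def Fa (a : ℂ) (m : ℕ) (t : ℂ) : ℂ :=
  ∏ p ∈ Finset.range m, (t + a - (p : ℂ))

lemma Fa_zero_eq_one (a t : ℂ) : Fa a 0 t = 1 := by simp [Fa]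

lemma Fa_add (a : ℂ) (m m' : ℕ) (t : ℂ) :
    Fa a (m + m') t = Fa a m t * Fa a m' (t - m) := by
  unfold Fa
  rw [Finset.prod_range_add]
  congr 1
  refine Finset.prod_congr rfl fun p _ => ?_
  push_cast; ring

lemma Fa_succ (a : ℂ) (m : ℕ) (t : ℂ) :
    Fa a (m + 1) t = Fa a m t * (t + a - m) := by
  unfold Fa; rw [Finset.prod_range_succ]

lemma Fa_shift (a : ℂ) (m : ℕ) (t : ℂ) :
    Fa a (m + 1) (t + 1) = (t + a + 1) * Fa a m t := by
  unfold Fa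
  rw [Finset.prod_range_succ']
  simp only [Nat.cast_zero, Nat.cast_add, Nat.cast_one]
  rw [mul_comm]
  congr 1
  · ring
  · refine Finset.prod_congr rfl fun p _ => by push_cast; ring

lemma Fa_comb (a : ℂ) {u v : ℤ} (hu : 0 ≤ u) (hv : 0 ≤ v) (t : ℂ) :
    Fa a v.toNat (t - u) * Fa a u.toNat t = Fa a (u + v).toNat t := by
  rw [Int.toNat_add hu hv, Fa_add]
  have h : ((u.toNat : ℕ) : ℂ) = (u : ℂ) := by
    have := Int.toNat_of_nonneg hu
    exact_mod_cast congrArg (fun z : ℤ => (z : ℂ)) this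
  rw [h]; ring

noncomputable def Pv {n : ℕ} (a : ℂ) (S : Finset (Fin n)) (k : Fin n → ℤ)
    (l : Fin n) (x : Fin n → ℂ) : ℂ :=
  (if k l = -1 ∧ l ∈ S then 1 else x l - (k l : ℂ) * (a + 1)) *
    ∏ q ∈ S, Fa a (k q).toNat (x q)


lemma eval_phiSA {n : ℕ} (a : ℂ) (S : Finset (Fin n)) (k : Fin n → ℤ)
    (l : Fin n) (x : Fin n → ℂ) :
    eval x (phiSA a S k l) = Pv a S k l x := by
  unfold phiSA Pv
  split_ifs with h
  · rw [one_mul]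
    have h1 : Fa a (k l).toNat (x l) = 1 := by rw [h.1]; simp [Fa]
    rw [← Finset.prod_erase S h1]
    simp [Fa, eval_prod]
  · simp [Fa, eval_prod]

lemma eval_aeval' {n : ℕ} (x : Fin n → ℂ) (g : Fin n → MvPolynomial (Fin n) ℂ)
    (f : MvPolynomial (Fin n) ℂ) :
    eval x (aeval g f) = eval (fun q => eval x (g q)) f := by
  induction f using MvPolynomial.induction_on with
  | C c => simp
  | add p q hp hq => simp only [map_add, eval_add, hp, hq]
  | mul_X p i hp => simp only [map_mul, eval_mul, hp, aeval_X, eval_X]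

lemma eval_omega {n : ℕ} (Λ : Fin n → ℂ) (a : ℂ) (S : Finset (Fin n))
    (i : Fin n) (k : Fin n → ℤ) (f : MvPolynomial (Fin n) ℂ) (x : Fin n → ℂ) :
    eval x (omegaSAct Λ a S i k f)
      = (∏ j, Λ j ^ (k j)) *
          (eval (fun q => x q - (k q : ℂ)) f * Pv a S k i x) := by
  unfold omegaSAct
  rw [smul_eval, eval_mul, eval_aeval', eval_phiSA]
  simp

lemma prod_comb {n : ℕ} (a : ℂ) (T : Finset (Fin n)) (r s : Fin n → ℤ)
    (x : Fin n → ℂ) (h : ∀ q ∈ T, 0 ≤ r q ∧ 0 ≤ s q) :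
    (∏ q ∈ T, Fa a (s q).toNat (x q - (r q : ℂ))) * ∏ q ∈ T, Fa a (r q).toNat (x q)
      = ∏ q ∈ T, Fa a (r q + s q).toNat (x q) := by
  rw [← Finset.prod_mul_distrib]
  exact Finset.prod_congr rfl fun q hq => Fa_comb a (h q hq).1 (h q hq).2 _

lemma prod_comb' {n : ℕ} (a : ℂ) (T : Finset (Fin n)) (r s : Fin n → ℤ)
    (x : Fin n → ℂ) (h : ∀ q ∈ T, 0 ≤ r q ∧ 0 ≤ s q) :
    (∏ q ∈ T, Fa a (r q).toNat (x q - (s q : ℂ))) * ∏ q ∈ T, Fa a (s q).toNat (x q)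
      = ∏ q ∈ T, Fa a (r q + s q).toNat (x q) := by
  rw [prod_comb a T s r x (fun q hq => ⟨(h q hq).2, (h q hq).1⟩)]
  exact Finset.prod_congr rfl fun q _ => by rw [add_comm]

lemma key_gen {n : ℕ} (a : ℂ) (S : Finset (Fin n)) (i j : Fin n) (r s : Fin n → ℤ)
    (hri : -1 ≤ r i) (hr : ∀ q, q ≠ i → 0 ≤ r q)
    (hsj : -1 ≤ s j) (hs : ∀ q, q ≠ j → 0 ≤ s q)
    (hA : ¬(r i = -1 ∧ i ∈ S)) (hB : ¬(s j = -1 ∧ j ∈ S)) (x : Fin n → ℂ) :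
    Pv a S s j (fun q => x q - (r q : ℂ)) * Pv a S r i x
      - Pv a S r i (fun q => x q - (s q : ℂ)) * Pv a S s j x
    = (s i : ℂ) * Pv a S (r + s) j x - (r j : ℂ) * Pv a S (r + s) i x := by
  have hrS : ∀ q ∈ S, 0 ≤ r q := by
    intro q hq
    by_cases e : q = i
    · subst e; rcases lt_or_ge (r q) 0 with h | h
      · exact absurd ⟨by omega, hq⟩ hA
      · exact h
    · exact hr q e
  have hsS : ∀ q ∈ S, 0 ≤ s q := by
    intro q hq
    by_cases e : q = j
    · subst e; rcases lt_or_ge (s q) 0 with h | h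
      · exact absurd ⟨by omega, hq⟩ hB
      · exact h
    · exact hs q e
  have hcomb1 := prod_comb a S r s x (fun q hq => ⟨hrS q hq, hsS q hq⟩)
  have hcomb2 := prod_comb' a S r s x (fun q hq => ⟨hrS q hq, hsS q hq⟩)
  have hC : ¬(r j + s j = -1 ∧ j ∈ S) := by
    rintro ⟨h1, h2⟩
    have := hrS j h2; have := hsS j h2; omega
  have hD : ¬(r i + s i = -1 ∧ i ∈ S) := by
    rintro ⟨h1, h2⟩
    have := hrS i h2; have := hsS i h2; omega
  simp only [Pv, Pi.add_apply, if_neg hA, if_neg hB, if_neg hC, if_neg hD]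
  push_cast
  linear_combination
    ((x j - (r j : ℂ) - (s j : ℂ) * (a + 1)) * (x i - (r i : ℂ) * (a + 1))) * hcomb1
    - ((x i - (s i : ℂ) - (r i : ℂ) * (a + 1)) * (x j - (s j : ℂ) * (a + 1))) * hcomb2

lemma key_mixB {n : ℕ} (a : ℂ) (S : Finset (Fin n)) (i j : Fin n) (r s : Fin n → ℤ)
    (hij : i ≠ j) (hiS : i ∈ S) (hri : r i = -1)
    (hr : ∀ q, q ≠ i → 0 ≤ r q) (hsj : -1 ≤ s j) (hs : ∀ q, q ≠ j → 0 ≤ s q)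
    (hB : ¬(s j = -1 ∧ j ∈ S)) (x : Fin n → ℂ) :
    Pv a S s j (fun q => x q - (r q : ℂ)) * Pv a S r i x
      - Pv a S r i (fun q => x q - (s q : ℂ)) * Pv a S s j x
    = (s i : ℂ) * Pv a S (r + s) j x - (r j : ℂ) * Pv a S (r + s) i x := by
  have hsi : 0 ≤ s i := hs i hij
  have hrj : 0 ≤ r j := hr j (Ne.symm hij)
  have hE : ∀ q ∈ S.erase i, 0 ≤ r q ∧ 0 ≤ s q := by
    intro q hq
    have hq1 : q ≠ i := Finset.ne_of_mem_erase hq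
    have hq2 : q ∈ S := Finset.mem_of_mem_erase hq
    refine ⟨hr q hq1, ?_⟩
    by_cases e : q = j
    · subst e
      rcases lt_or_ge (s q) 0 with h | h
      · exact absurd ⟨by omega, hq2⟩ hB
      · exact h
    · exact hs q e
  have hcomb1 := prod_comb a (S.erase i) r s x hE
  have hcomb2 := prod_comb' a (S.erase i) r s x hE
  have peel : ∀ (k : Fin n → ℤ) (y : Fin n → ℂ),
      ∏ q ∈ S, Fa a (k q).toNat (y q)
        = Fa a (k i).toNat (y i) * ∏ q ∈ S.erase i, Fa a (k q).toNat (y q) :=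
    fun k y => (Finset.mul_prod_erase S _ hiS).symm
  have hifr : r i = -1 ∧ i ∈ S := ⟨hri, hiS⟩
  have hifC : ¬(r j + s j = -1 ∧ j ∈ S) := by
    rintro ⟨h1, h2⟩
    rcases lt_or_ge (s j) 0 with h | h
    · exact hB ⟨by omega, h2⟩
    · omega
  have harg : x i - ((r i : ℤ) : ℂ) = x i + 1 := by rw [hri]; push_cast; ring
  rcases Nat.eq_zero_or_eq_succ_pred (s i).toNat with h0' | hm
  · -- s i = 0
    have hs0 : s i = 0 := by omega
    have h1 : (s i).toNat = 0 := by omega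
    have h0 : (r i).toNat = 0 := by omega
    have h2 : (r i + s i).toNat = 0 := by omega
    have hifD : r i + s i = -1 ∧ i ∈ S := ⟨by omega, hiS⟩
    have hc1 : ((s i : ℤ) : ℂ) = 0 := by rw [hs0]; norm_num
    have hc4 : ((r j + s j : ℤ) : ℂ) = (r j : ℂ) + (s j : ℂ) := by push_cast; ring
    simp only [Pv, Pi.add_apply, if_pos hifr, if_pos hifD, if_neg hB, if_neg hifC, peel]
    simp only [h1, h0, h2, Fa_zero_eq_one, harg, hc1, hc4, one_mul, mul_one]
    linear_combination (x j - (r j : ℂ) - (s j : ℂ) * (a + 1)) * hcomb1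
      - (x j - (s j : ℂ) * (a + 1)) * hcomb2
  · -- s i = m + 1
    set m := (s i).toNat - 1 with hmdef
    have hsm : s i = (m : ℤ) + 1 := by omega
    have h1 : (s i).toNat = m + 1 := by omega
    have h2 : (r i + s i).toNat = m := by omega
    have h0 : (r i).toNat = 0 := by omega
    have hifD : ¬(r i + s i = -1 ∧ i ∈ S) := by rintro ⟨h', _⟩; omega
    have hc1 : ((s i : ℤ) : ℂ) = (m : ℂ) + 1 := by rw [hsm]; push_cast; ring
    have hc2 : ((r i + s i : ℤ) : ℂ) = (m : ℂ) := by
      have : r i + s i = (m : ℤ) := by omega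
      rw [this]; push_cast; ring
    have hc4 : ((r j + s j : ℤ) : ℂ) = (r j : ℂ) + (s j : ℂ) := by push_cast; ring
    simp only [Pv, Pi.add_apply, if_pos hifr, if_neg hB, if_neg hifC, if_neg hifD, peel]
    simp only [h1, h2, h0, Fa_zero_eq_one, harg, hc1, hc2, hc4, one_mul, mul_one]
    rw [Fa_shift, Fa_succ]
    linear_combination
      ((x j - (r j : ℂ) - (s j : ℂ) * (a + 1)) * (x i + a + 1) * Fa a m (x i)) * hcomb1
      - ((x j - (s j : ℂ) * (a + 1)) * (x i + a - m) * Fa a m (x i)) * hcomb2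

lemma key_mixA {n : ℕ} (a : ℂ) (S : Finset (Fin n)) (i : Fin n) (r s : Fin n → ℤ)
    (hiS : i ∈ S) (hri : r i = -1) (hsi : 0 ≤ s i)
    (hr : ∀ q, q ≠ i → 0 ≤ r q) (hs : ∀ q, q ≠ i → 0 ≤ s q) (x : Fin n → ℂ) :
    Pv a S s i (fun q => x q - (r q : ℂ)) * Pv a S r i x
      - Pv a S r i (fun q => x q - (s q : ℂ)) * Pv a S s i x
    = (s i : ℂ) * Pv a S (r + s) i x - (r i : ℂ) * Pv a S (r + s) i x := by
  have hE : ∀ q ∈ S.erase i, 0 ≤ r q ∧ 0 ≤ s q := fun q hq =>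
    ⟨hr q (Finset.ne_of_mem_erase hq), hs q (Finset.ne_of_mem_erase hq)⟩
  have hcomb1 := prod_comb a (S.erase i) r s x hE
  have hcomb2 := prod_comb' a (S.erase i) r s x hE
  have peel : ∀ (k : Fin n → ℤ) (y : Fin n → ℂ),
      ∏ q ∈ S, Fa a (k q).toNat (y q)
        = Fa a (k i).toNat (y i) * ∏ q ∈ S.erase i, Fa a (k q).toNat (y q) :=
    fun k y => (Finset.mul_prod_erase S _ hiS).symm
  have hifr : r i = -1 ∧ i ∈ S := ⟨hri, hiS⟩
  have hifs : ¬(s i = -1 ∧ i ∈ S) := by rintro ⟨h', _⟩; omega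
  have harg : x i - ((r i : ℤ) : ℂ) = x i + 1 := by rw [hri]; push_cast; ring
  have hcr : ((r i : ℤ) : ℂ) = -1 := by rw [hri]; norm_num
  have h0 : (r i).toNat = 0 := by omega
  rcases Nat.eq_zero_or_eq_succ_pred (s i).toNat with h0' | hm
  · -- s i = 0
    have hs0 : s i = 0 := by omega
    have h1 : (s i).toNat = 0 := by omega
    have h2 : (r i + s i).toNat = 0 := by omega
    have hifD : r i + s i = -1 ∧ i ∈ S := ⟨by omega, hiS⟩
    have hc1 : ((s i : ℤ) : ℂ) = 0 := by rw [hs0]; norm_num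
    simp only [Pv, Pi.add_apply, if_pos hifr, if_pos hifD, if_neg hifs, peel]
    simp only [h1, h0, h2, Fa_zero_eq_one, harg, hc1, hcr, one_mul, mul_one]
    linear_combination (x i + 1) * hcomb1 - x i * hcomb2
  · -- s i = m + 1
    set m := (s i).toNat - 1 with hmdef
    have hsm : s i = (m : ℤ) + 1 := by omega
    have h1 : (s i).toNat = m + 1 := by omega
    have h2 : (r i + s i).toNat = m := by omega
    have hifD : ¬(r i + s i = -1 ∧ i ∈ S) := by rintro ⟨h', _⟩; omega
    have hc1 : ((s i : ℤ) : ℂ) = (m : ℂ) + 1 := by rw [hsm]; push_cast; ring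
    have hc2 : ((r i + s i : ℤ) : ℂ) = (m : ℂ) := by
      have : r i + s i = (m : ℤ) := by omega
      rw [this]; push_cast; ring
    simp only [Pv, Pi.add_apply, if_pos hifr, if_neg hifs, if_neg hifD, peel]
    simp only [h1, h2, h0, Fa_zero_eq_one, harg, hc1, hc2, hcr, sub_neg_eq_add, one_mul, mul_one]
    rw [Fa_shift, Fa_succ]
    linear_combination
      ((x i + 1 - ((m : ℂ) + 1) * (a + 1)) * (x i + a + 1) * Fa a m (x i)) * hcomb1
      - ((x i - ((m : ℂ) + 1) * (a + 1)) * (x i + a - m) * Fa a m (x i)) * hcomb2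

lemma key_bothA {n : ℕ} (a : ℂ) (S : Finset (Fin n)) (i : Fin n) (r s : Fin n → ℤ)
    (hiS : i ∈ S) (hri : r i = -1) (hsi : s i = -1)
    (hr : ∀ q, q ≠ i → 0 ≤ r q) (hs : ∀ q, q ≠ i → 0 ≤ s q) (x : Fin n → ℂ) :
    Pv a S s i (fun q => x q - (r q : ℂ)) * Pv a S r i x
      - Pv a S r i (fun q => x q - (s q : ℂ)) * Pv a S s i x
    = (s i : ℂ) * Pv a S (r + s) i x - (r i : ℂ) * Pv a S (r + s) i x := by
  have hE : ∀ q ∈ S.erase i, 0 ≤ r q ∧ 0 ≤ s q := fun q hq =>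
    ⟨hr q (Finset.ne_of_mem_erase hq), hs q (Finset.ne_of_mem_erase hq)⟩
  have hcomb1 := prod_comb a (S.erase i) r s x hE
  have hcomb2 := prod_comb' a (S.erase i) r s x hE
  have peel : ∀ (k : Fin n → ℤ) (y : Fin n → ℂ),
      ∏ q ∈ S, Fa a (k q).toNat (y q)
        = Fa a (k i).toNat (y i) * ∏ q ∈ S.erase i, Fa a (k q).toNat (y q) :=
    fun k y => (Finset.mul_prod_erase S _ hiS).symm
  have hifr : r i = -1 ∧ i ∈ S := ⟨hri, hiS⟩
  have hifs : s i = -1 ∧ i ∈ S := ⟨hsi, hiS⟩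
  have hifD : ¬(r i + s i = -1 ∧ i ∈ S) := by rintro ⟨h', _⟩; omega
  have h0 : (r i).toNat = 0 := by omega
  have h1 : (s i).toNat = 0 := by omega
  have h2 : (r i + s i).toNat = 0 := by omega
  have hcr : ((r i : ℤ) : ℂ) = -1 := by rw [hri]; norm_num
  have hcs : ((s i : ℤ) : ℂ) = -1 := by rw [hsi]; norm_num
  simp only [Pv, Pi.add_apply, if_pos hifr, if_pos hifs, if_neg hifD, peel]
  simp only [h0, h1, h2, Fa_zero_eq_one, hcr, hcs, one_mul, mul_one]
  linear_combination hcomb1 - hcomb2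

lemma key_bothB {n : ℕ} (a : ℂ) (S : Finset (Fin n)) (i j : Fin n) (r s : Fin n → ℤ)
    (hij : i ≠ j) (hiS : i ∈ S) (hjS : j ∈ S) (hri : r i = -1) (hsj : s j = -1)
    (hr : ∀ q, q ≠ i → 0 ≤ r q) (hs : ∀ q, q ≠ j → 0 ≤ s q) (x : Fin n → ℂ) :
    Pv a S s j (fun q => x q - (r q : ℂ)) * Pv a S r i x
      - Pv a S r i (fun q => x q - (s q : ℂ)) * Pv a S s j x
    = (s i : ℂ) * Pv a S (r + s) j x - (r j : ℂ) * Pv a S (r + s) i x := by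
  have hsi : 0 ≤ s i := hs i hij
  have hrj : 0 ≤ r j := hr j (Ne.symm hij)
  have hjT : j ∈ S.erase i := Finset.mem_erase.mpr ⟨Ne.symm hij, hjS⟩
  have hE : ∀ q ∈ (S.erase i).erase j, 0 ≤ r q ∧ 0 ≤ s q := by
    intro q hq
    have hq1 : q ≠ j := Finset.ne_of_mem_erase hq
    have hq2 : q ≠ i := Finset.ne_of_mem_erase (Finset.mem_of_mem_erase hq)
    exact ⟨hr q hq2, hs q hq1⟩
  have hcomb1 := prod_comb a ((S.erase i).erase j) r s x hE
  have hcomb2 := prod_comb' a ((S.erase i).erase j) r s x hE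
  have peel2 : ∀ (k : Fin n → ℤ) (y : Fin n → ℂ),
      ∏ q ∈ S, Fa a (k q).toNat (y q)
        = Fa a (k i).toNat (y i) *
            (Fa a (k j).toNat (y j) * ∏ q ∈ (S.erase i).erase j, Fa a (k q).toNat (y q)) := by
    intro k y
    rw [← Finset.mul_prod_erase S _ hiS, ← Finset.mul_prod_erase (S.erase i) _ hjT]
  have hifr : r i = -1 ∧ i ∈ S := ⟨hri, hiS⟩
  have hifs : s j = -1 ∧ j ∈ S := ⟨hsj, hjS⟩
  have h0r : (r i).toNat = 0 := by omega
  have h0s : (s j).toNat = 0 := by omega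
  have hargi : x i - ((r i : ℤ) : ℂ) = x i + 1 := by rw [hri]; push_cast; ring
  have hargj : x j - ((s j : ℤ) : ℂ) = x j + 1 := by rw [hsj]; push_cast; ring
  rcases Nat.eq_zero_or_eq_succ_pred (s i).toNat with hm0 | hm
  · have hs0 : s i = 0 := by omega
    have h1 : (s i).toNat = 0 := by omega
    have h3 : (r i + s i).toNat = 0 := by omega
    have hifDi : r i + s i = -1 ∧ i ∈ S := ⟨by omega, hiS⟩
    have hci : ((s i : ℤ) : ℂ) = 0 := by rw [hs0]; norm_num
    rcases Nat.eq_zero_or_eq_succ_pred (r j).toNat with hl0 | hl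
    · -- s i = 0, r j = 0
      have hr0 : r j = 0 := by omega
      have h2 : (r j).toNat = 0 := by omega
      have h4 : (r j + s j).toNat = 0 := by omega
      have hifDj : r j + s j = -1 ∧ j ∈ S := ⟨by omega, hjS⟩
      have hcj : ((r j : ℤ) : ℂ) = 0 := by rw [hr0]; norm_num
      simp only [Pv, Pi.add_apply, if_pos hifr, if_pos hifs, if_pos hifDi, if_pos hifDj, peel2]
      simp only [h0r, h0s, h1, h2, h3, h4, Fa_zero_eq_one, hargi, hargj, hci, hcj,
        one_mul, mul_one]
      linear_combination hcomb1 - hcomb2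
    · -- s i = 0, r j = l + 1
      set l := (r j).toNat - 1 with hldef
      have h2 : (r j).toNat = l + 1 := by omega
      have h4 : (r j + s j).toNat = l := by omega
      have hifDj : ¬(r j + s j = -1 ∧ j ∈ S) := by rintro ⟨h', _⟩; omega
      have hcj : ((r j : ℤ) : ℂ) = (l : ℂ) + 1 := by
        have : r j = (l : ℤ) + 1 := by omega
        rw [this]; push_cast; ring
      have hc4 : ((r j + s j : ℤ) : ℂ) = (l : ℂ) := by
        have : r j + s j = (l : ℤ) := by omega
        rw [this]; push_cast; ring
      simp only [Pv, Pi.add_apply, if_pos hifr, if_pos hifs, if_pos hifDi, if_neg hifDj, peel2]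
      simp only [h0r, h0s, h1, h2, h3, h4, Fa_zero_eq_one, hargi, hargj, hci, hcj, hc4,
        one_mul, mul_one]
      rw [Fa_shift a l (x j), Fa_succ a l (x j)]
      linear_combination ((x j + a - l) * Fa a l (x j)) * hcomb1
        - ((x j + a + 1) * Fa a l (x j)) * hcomb2
  · set m := (s i).toNat - 1 with hmdef
    have h1 : (s i).toNat = m + 1 := by omega
    have h3 : (r i + s i).toNat = m := by omega
    have hifDi : ¬(r i + s i = -1 ∧ i ∈ S) := by rintro ⟨h', _⟩; omega
    have hci : ((s i : ℤ) : ℂ) = (m : ℂ) + 1 := by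
      have : s i = (m : ℤ) + 1 := by omega
      rw [this]; push_cast; ring
    have hc3 : ((r i + s i : ℤ) : ℂ) = (m : ℂ) := by
      have : r i + s i = (m : ℤ) := by omega
      rw [this]; push_cast; ring
    rcases Nat.eq_zero_or_eq_succ_pred (r j).toNat with hl0 | hl
    · -- s i = m + 1, r j = 0
      have hr0 : r j = 0 := by omega
      have h2 : (r j).toNat = 0 := by omega
      have h4 : (r j + s j).toNat = 0 := by omega
      have hifDj : r j + s j = -1 ∧ j ∈ S := ⟨by omega, hjS⟩
      have hcj : ((r j : ℤ) : ℂ) = 0 := by rw [hr0]; norm_num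
      simp only [Pv, Pi.add_apply, if_pos hifr, if_pos hifs, if_neg hifDi, if_pos hifDj, peel2]
      simp only [h0r, h0s, h1, h2, h3, h4, Fa_zero_eq_one, hargi, hargj, hci, hcj, hc3,
        one_mul, mul_one]
      rw [Fa_shift a m (x i), Fa_succ a m (x i)]
      linear_combination ((x i + a + 1) * Fa a m (x i)) * hcomb1
        - ((x i + a - m) * Fa a m (x i)) * hcomb2
    · -- s i = m + 1, r j = l + 1
      set l := (r j).toNat - 1 with hldef
      have h2 : (r j).toNat = l + 1 := by omega
      have h4 : (r j + s j).toNat = l := by omega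
      have hifDj : ¬(r j + s j = -1 ∧ j ∈ S) := by rintro ⟨h', _⟩; omega
      have hcj : ((r j : ℤ) : ℂ) = (l : ℂ) + 1 := by
        have : r j = (l : ℤ) + 1 := by omega
        rw [this]; push_cast; ring
      have hc4 : ((r j + s j : ℤ) : ℂ) = (l : ℂ) := by
        have : r j + s j = (l : ℤ) := by omega
        rw [this]; push_cast; ring
      simp only [Pv, Pi.add_apply, if_pos hifr, if_pos hifs, if_neg hifDi, if_neg hifDj, peel2]
      simp only [h0r, h0s, h1, h2, h3, h4, Fa_zero_eq_one, hargi, hargj, hci, hcj, hc3, hc4,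
        one_mul, mul_one]
      rw [Fa_shift a m (x i), Fa_succ a m (x i), Fa_shift a l (x j), Fa_succ a l (x j)]
      linear_combination
        ((x i + a + 1) * (x j + a - l) * Fa a m (x i) * Fa a l (x j)) * hcomb1
        - ((x j + a + 1) * (x i + a - m) * Fa a m (x i) * Fa a l (x j)) * hcomb2

lemma key {n : ℕ} (a : ℂ) (S : Finset (Fin n)) (i j : Fin n) (r s : Fin n → ℤ)
    (hri : -1 ≤ r i) (hr : ∀ q, q ≠ i → 0 ≤ r q)
    (hsj : -1 ≤ s j) (hs : ∀ q, q ≠ j → 0 ≤ s q) (x : Fin n → ℂ) :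
    Pv a S s j (fun q => x q - (r q : ℂ)) * Pv a S r i x
      - Pv a S r i (fun q => x q - (s q : ℂ)) * Pv a S s j x
    = (s i : ℂ) * Pv a S (r + s) j x - (r j : ℂ) * Pv a S (r + s) i x := by
  by_cases hA : r i = -1 ∧ i ∈ S
  · by_cases hB : s j = -1 ∧ j ∈ S
    · by_cases hij : i = j
      · subst hij; exact key_bothA a S i r s hA.2 hA.1 hB.1 hr hs x
      · exact key_bothB a S i j r s hij hA.2 hB.2 hA.1 hB.1 hr hs x
    · by_cases hij : i = j
      · subst hij
        have hsi : 0 ≤ s i := by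
          rcases lt_or_ge (s i) 0 with h | h
          · exact absurd ⟨by omega, hA.2⟩ hB
          · exact h
        exact key_mixA a S i r s hA.2 hA.1 hsi hr hs x
      · exact key_mixB a S i j r s hij hA.2 hA.1 hr hsj hs hB x
  · by_cases hB : s j = -1 ∧ j ∈ S
    · by_cases hij : i = j
      · subst hij
        have hri0 : 0 ≤ r i := by
          rcases lt_or_ge (r i) 0 with h | h
          · exact absurd ⟨by omega, hB.2⟩ hA
          · exact h
        have h := key_mixA a S i s r hB.2 hB.1 hri0 hs hr x
        rw [add_comm s r] at h
        linear_combination -h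
      · have h := key_mixB a S j i s r (Ne.symm hij) hB.2 hB.1 hs hri hr hA x
        rw [add_comm s r] at h
        linear_combination -h
    · exact key_gen a S i j r s hri hr hsj hs hA hB x


/-- the action above defines a `W_n^+`-module structure on
`ℂ[x_1,...,x_n]`, i.e. it satisfies the bracket relations
`[t^r ∂_i, t^s ∂_j] = s_i t^{r+s} ∂_j - r_j t^{r+s} ∂_i`. -/
theorem omegaS_is_module {n : ℕ} (hn : 1 ≤ n) (Λ : Fin n → ℂ) (hΛ : ∀ j, Λ j ≠ 0)
    (a : ℂ) (S : Finset (Fin n)) :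
    ∀ (i j : Fin n) (r s : Fin n → ℤ), Admissible i r → Admissible j s →
      ∀ f : MvPolynomial (Fin n) ℂ,
        omegaSAct Λ a S i r (omegaSAct Λ a S j s f)
            - omegaSAct Λ a S j s (omegaSAct Λ a S i r f)
          = (s i : ℂ) • omegaSAct Λ a S j (r + s) f
            - (r j : ℂ) • omegaSAct Λ a S i (r + s) f := by
  intro i j r s hr hs f
  apply MvPolynomial.funext
  intro x
  have hprod : (∏ q, Λ q ^ ((r + s) q)) = (∏ q, Λ q ^ (r q)) * ∏ q, Λ q ^ (s q) := by
    rw [← Finset.prod_mul_distrib]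
    exact Finset.prod_congr rfl fun q _ => by
      rw [Pi.add_apply, zpow_add₀ (hΛ q)]
  have hshift1 : (fun q => (x q - (r q : ℂ)) - (s q : ℂ))
      = fun q => x q - (((r + s) q : ℤ) : ℂ) := by
    funext q; rw [Pi.add_apply]; push_cast; ring
  have hshift2 : (fun q => (x q - (s q : ℂ)) - (r q : ℂ))
      = fun q => x q - (((r + s) q : ℤ) : ℂ) := by
    funext q; rw [Pi.add_apply]; push_cast; ring
  rw [eval_sub, eval_sub, smul_eval, smul_eval, eval_omega, eval_omega,
    eval_omega, eval_omega, eval_omega, eval_omega, hshift1, hshift2, hprod]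
  have hkey := key a S i j r s hr.1 hr.2 hs.1 hs.2 x
  linear_combination ((∏ q, Λ q ^ (r q)) * (∏ q, Λ q ^ (s q)) *
    eval (fun q => x q - (((r + s) q : ℤ) : ℂ)) f) * hkey
end

section
/- For n ≥ 2, Λ_n = (λ_1,...,λ_n) ∈ (ℂ*)^n and a ∈ ℂ, the action t^k ∂_i · f(x_1,...,x_n) = Λ_n^k (x_i - k_i(a+1)) f(x_1 - k_1, ..., x_n - k_n), for all k ∈ ℤ^n and 1 ≤ i ≤ n, defines a W_n-module structure on ℂ[x_1,...,x_n]. -/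
open MvPolynomial

/-- The action of `t^k ∂_i` (`k ∈ ℤ^n`) on `Ω(Λ_n, a) = ℂ[x_1,...,x_n]`. -/
noncomputable def omegaNAct {n : ℕ} (Λ : Fin n → ℂ) (a : ℂ)
    (i : Fin n) (k : Fin n → ℤ) (f : MvPolynomial (Fin n) ℂ) :
    MvPolynomial (Fin n) ℂ :=
  (∏ j, Λ j ^ (k j)) •
    ((X i - C ((k i : ℂ) * (a + 1))) * aeval (fun j => X j - C ((k j : ℂ))) f)

/-- Composing two shifts gives the shift by the sum. -/
lemma omegaN_shift_shift {n : ℕ} (r s : Fin n → ℤ) (f : MvPolynomial (Fin n) ℂ) :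
    aeval (fun j => X j - C ((r j : ℂ))) (aeval (fun j => X j - C ((s j : ℂ))) f)
      = aeval (fun j => X j - C (((r j : ℂ) + (s j : ℂ)))) f := by
  rw [← AlgHom.comp_apply, MvPolynomial.comp_aeval]
  have : (fun i => (aeval fun j => X j - C ((r j : ℂ))) (X i - C ((s i : ℂ))))
      = fun j => X j - C (((r j : ℂ) + (s j : ℂ))) := by
    funext j; simp [sub_sub]
  rw [this]

/-- for `n ≥ 2`, the action above defines a `W_n`-module structure on
`ℂ[x_1,...,x_n]`, i.e. it satisfies
`[t^r ∂_i, t^s ∂_j] = s_i t^{r+s} ∂_j - r_j t^{r+s} ∂_i` for all `r, s ∈ ℤ^n`. -/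
theorem omegaN_is_module {n : ℕ} (hn : 2 ≤ n) (Λ : Fin n → ℂ) (hΛ : ∀ j, Λ j ≠ 0)
    (a : ℂ) :
    ∀ (i j : Fin n) (r s : Fin n → ℤ) (f : MvPolynomial (Fin n) ℂ),
      omegaNAct Λ a i r (omegaNAct Λ a j s f)
          - omegaNAct Λ a j s (omegaNAct Λ a i r f)
        = (s i : ℂ) • omegaNAct Λ a j (r + s) f
          - (r j : ℂ) • omegaNAct Λ a i (r + s) f := by
  intro i j r s f
  have hP : (∏ t, Λ t ^ (r t)) * (∏ t, Λ t ^ (s t)) = ∏ t, Λ t ^ ((r + s) t) := by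
    rw [← Finset.prod_mul_distrib]
    exact Finset.prod_congr rfl fun t _ => (zpow_add₀ (hΛ t) (r t) (s t)).symm
  have hcast : ∀ t : Fin n, (((r + s) t : ℤ) : ℂ) = (r t : ℂ) + (s t : ℂ) := by
    intro t; push_cast [Pi.add_apply]; ring
  have hsr : (fun t : Fin n => X t - (C ((s t : ℂ)) + C ((r t : ℂ))))
      = (fun t : Fin n => (X t : MvPolynomial (Fin n) ℂ) - (C ((r t : ℂ)) + C ((s t : ℂ)))) := by
    funext t; rw [add_comm (C ((s t : ℂ)))]
  unfold omegaNAct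
  simp only [map_smul, map_mul, map_sub, aeval_X, aeval_C, omegaN_shift_shift, hcast, hsr,
    smul_eq_C_mul, map_add, map_mul, ← hP, algebraMap_eq, C_1, map_one]
  ring
end

section
/- The W_n-module Ω(Λ_n, a) is simple if and only if a ≠ -1. -/
/-!
If `a = -1`, then `t^k ∂_i f = Λ^k x_i f(x - k)` is always a multiple of `x_i`, so the polynomials
without constant term form a proper nonzero submodule.

If `a ≠ -1`, take `f ≠ 0` in a submodule `N` and a variable `x_i` of degree `d ≥ 1` in `f`.
Up to the unit `Λ_i ^ m`, `t^(-m e_i) ∂_i f = (x_i + m (a + 1)) f(x + m e_i)` is the value at `m`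
of a polynomial in `m` of degree `d + 1` with coefficients in `ℂ[x]`. Its `(d + 1)`-st forward
difference at `0` is a combination of these values, so its leading coefficient, `a + 1` times the
coefficient of `x_i ^ d` in `f`, lies in `N`; this has smaller total degree than `f`. Hence `N`
contains a nonzero constant, and then everything, because `t^0 ∂_i` is multiplication by `x_i`.
-/

open MvPolynomial

theorem Polynomial.leadingCoeff_mul_factorial_mem {R : Type*} [CommRing R] {N : AddSubgroup R}
    {P : Polynomial R} (hP : ∀ m : ℕ, P.eval (m : R) ∈ N) :
    P.leadingCoeff * P.natDegree.factorial ∈ N := by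
  have h := congrFun P.fwdDiff_iter_degree_eq_factorial 0
  rw [fwdDiff_iter_eq_sum_shift] at h
  simp only [Pi.smul_apply, Pi.natCast_apply, smul_eq_mul, zero_add, nsmul_one] at h
  rw [← h]
  exact N.sum_mem fun k _ => N.zsmul_mem (hP k) _

theorem Polynomial.leadingCoeff_mem_of_eval_natCast_mem {K A : Type*} [Field K] [CharZero K]
    [CommRing A] [Algebra K A] {N : Submodule K A} {P : Polynomial A}
    (hP : ∀ m : ℕ, P.eval (m : A) ∈ N) : P.leadingCoeff ∈ N := by
  have h := N.smul_mem ((P.natDegree.factorial : K)⁻¹)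
    (leadingCoeff_mul_factorial_mem (N := N.toAddSubgroup) hP)
  rwa [Algebra.smul_def, mul_comm, mul_assoc, ← map_natCast (algebraMap K A), ← map_mul,
    mul_inv_cancel₀ (Nat.cast_ne_zero.2 P.natDegree.factorial_ne_zero), map_one, mul_one] at h

namespace MvPolynomial

variable {R σ : Type*} [CommSemiring R] [DecidableEq σ]

/-- `f (x + Y • e i)` as a polynomial in `Y`: expand `f` in powers of `x i` and shift by `x i`. -/
noncomputable def shiftPolynomial (i : σ) (f : MvPolynomial σ R) : Polynomial (MvPolynomial σ R) :=
  Polynomial.taylor (X i) ((optionEquivLeft R {j // j ≠ i}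
    (rename (Equiv.optionSubtypeNe i).symm f)).map
    (rename Subtype.val : MvPolynomial {j // j ≠ i} R →ₐ[R] MvPolynomial σ R))

theorem eval_shiftPolynomial (i : σ) (f : MvPolynomial σ R) (r : MvPolynomial σ R) :
    (shiftPolynomial i f).eval r = aeval (fun j => if j = i then X i + r else X j) f := by
  have hcomp : ((Polynomial.aeval (r + X i)).restrictScalars R).comp
      ((Polynomial.mapAlgHom (rename Subtype.val)).comp
        ((optionEquivLeft R {j // j ≠ i}).toAlgHom.comp (rename (Equiv.optionSubtypeNe i).symm)))
      = aeval (fun j => if j = i then X i + r else X j) := by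
    refine algHom_ext fun j => ?_
    by_cases hj : j = i
    · subst hj
      simp [optionEquivLeft_X_none, add_comm]
    · simp [Equiv.optionSubtypeNe_symm_of_ne hj, optionEquivLeft_X_some, hj]
  rw [shiftPolynomial, Polynomial.taylor_eval, ← hcomp]
  simp

theorem shiftPolynomial_ne_zero {i : σ} {f : MvPolynomial σ R} (hf : f ≠ 0) :
    shiftPolynomial i f ≠ 0 := by
  intro h
  have h0 := congrArg (Polynomial.eval 0) h
  rw [eval_shiftPolynomial, Polynomial.eval_zero] at h0
  have hX : (fun j => if j = i then X i + 0 else X j : σ → MvPolynomial σ R) = X := by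
    funext j
    split_ifs with hj <;> simp [hj]
  rw [hX, aeval_X_left_apply] at h0
  exact hf h0

theorem totalDegree_leadingCoeff_shiftPolynomial_add_le (i : σ) (f : MvPolynomial σ R) :
    (shiftPolynomial i f).leadingCoeff.totalDegree + degreeOf i f ≤ f.totalDegree := by
  set p := rename (Equiv.optionSubtypeNe i).symm f
  have hlc : (shiftPolynomial i f).leadingCoeff =
      rename Subtype.val (optionEquivLeft R _ p).leadingCoeff := by
    rw [shiftPolynomial, Polynomial.leadingCoeff_taylor]
    exact Polynomial.leadingCoeff_map_of_injective (rename_injective _ Subtype.val_injective) _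
  rw [hlc, degreeOf_eq_natDegree]
  calc _ ≤ (optionEquivLeft R _ p).leadingCoeff.totalDegree + (optionEquivLeft R _ p).natDegree :=
        Nat.add_le_add_right (totalDegree_rename_le _ _) _
    _ ≤ p.totalDegree := totalDegree_coeff_optionEquivLeft_add_le R _ p _
        (by rw [natDegree_optionEquivLeft]; exact degreeOf_le_totalDegree p none)
    _ = f.totalDegree := totalDegree_renameEquiv (Equiv.optionSubtypeNe i).symm f

end MvPolynomial

section OmegaN

variable {n : ℕ} {Λ : Fin n → ℂ} {a : ℂ}

def IsOmegaNInvariant (Λ : Fin n → ℂ) (a : ℂ) (N : Submodule ℂ (MvPolynomial (Fin n) ℂ)) :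
    Prop :=
  ∀ (i : Fin n) (k : Fin n → ℤ), ∀ f ∈ N, omegaNAct Λ a i k f ∈ N

theorem omegaNAct_zero (i : Fin n) (f : MvPolynomial (Fin n) ℂ) :
    omegaNAct Λ a i 0 f = X i * f := by
  simp [omegaNAct]

theorem smul_omegaNAct_neg_single (hΛ : ∀ j, Λ j ≠ 0) (i : Fin n) (m : ℕ)
    (f : MvPolynomial (Fin n) ℂ) :
    Λ i ^ m • omegaNAct Λ a i (-Pi.single i (m : ℤ)) f =
      ((Polynomial.C (C (a + 1)) * Polynomial.X + Polynomial.C (X i)) *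
        shiftPolynomial i f).eval (m : MvPolynomial (Fin n) ℂ) := by
  have hprod : ∏ j, Λ j ^ (-Pi.single i (m : ℤ) : Fin n → ℤ) j = (Λ i ^ m)⁻¹ := by
    rw [Finset.prod_eq_single i (fun j _ hj => by simp [hj]) (by simp)]
    simp only [Pi.neg_apply, Pi.single_eq_same, zpow_neg, zpow_natCast]
  have hshift : (fun j => X j - C (((-Pi.single i (m : ℤ) : Fin n → ℤ) j : ℤ) : ℂ)) =
      fun j => if j = i then X i + (m : MvPolynomial (Fin n) ℂ) else X j := by
    funext j
    by_cases hj : j = i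
    · subst hj; simp
    · simp [hj]
  rw [omegaNAct, hprod, smul_smul, mul_inv_cancel₀ (pow_ne_zero m (hΛ i)), one_smul, hshift,
    Polynomial.eval_mul, eval_shiftPolynomial]
  simp only [Polynomial.eval_add, Polynomial.eval_mul, Polynomial.eval_C, Polynomial.eval_X]
  congr 1
  simp only [Pi.neg_apply, Pi.single_eq_same, Int.cast_neg, Int.cast_natCast, neg_mul, map_neg,
    map_mul, map_natCast, sub_neg_eq_add]
  ring

namespace IsOmegaNInvariant

variable {N : Submodule ℂ (MvPolynomial (Fin n) ℂ)}

theorem X_mul_mem (hN : IsOmegaNInvariant Λ a N) (i : Fin n) {f : MvPolynomial (Fin n) ℂ}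
    (hf : f ∈ N) : X i * f ∈ N :=
  omegaNAct_zero (Λ := Λ) (a := a) i f ▸ hN i 0 f hf

theorem eq_top_of_one_mem (hN : IsOmegaNInvariant Λ a N) (h1 : 1 ∈ N) : N = ⊤ := by
  refine Submodule.eq_top_iff'.2 fun f => ?_
  induction f using MvPolynomial.induction_on with
  | C c => simpa [smul_eq_C_mul] using N.smul_mem c h1
  | add p q hp hq => exact N.add_mem hp hq
  | mul_X p i hp => exact mul_comm (X i) p ▸ hN.X_mul_mem i hp

theorem leadingCoeff_shiftPolynomial_mem (hN : IsOmegaNInvariant Λ a N) (hΛ : ∀ j, Λ j ≠ 0)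
    (ha : a + 1 ≠ 0) (i : Fin n) {f : MvPolynomial (Fin n) ℂ} (hf : f ∈ N) :
    (shiftPolynomial i f).leadingCoeff ∈ N := by
  have h := Polynomial.leadingCoeff_mem_of_eval_natCast_mem fun m =>
    smul_omegaNAct_neg_single hΛ i m f ▸ N.smul_mem (Λ i ^ m) (hN i _ f hf)
  rw [Polynomial.leadingCoeff_mul, Polynomial.leadingCoeff_linear (C_ne_zero.2 ha),
    ← smul_eq_C_mul] at h
  simpa [ha] using N.smul_mem (a + 1)⁻¹ h

theorem exists_mem_totalDegree_lt (hN : IsOmegaNInvariant Λ a N) (hΛ : ∀ j, Λ j ≠ 0)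
    (ha : a + 1 ≠ 0) {f : MvPolynomial (Fin n) ℂ} (hf : f ∈ N) (hf0 : f ≠ 0) {i : Fin n}
    (hi : degreeOf i f ≠ 0) : ∃ g ∈ N, g ≠ 0 ∧ g.totalDegree < f.totalDegree :=
  ⟨_, hN.leadingCoeff_shiftPolynomial_mem hΛ ha i hf,
    Polynomial.leadingCoeff_ne_zero.2 (shiftPolynomial_ne_zero hf0),
    by have := totalDegree_leadingCoeff_shiftPolynomial_add_le i f; omega⟩

theorem one_mem (hN : IsOmegaNInvariant Λ a N) (hΛ : ∀ j, Λ j ≠ 0) (ha : a + 1 ≠ 0)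
    (hN0 : N ≠ ⊥) : 1 ∈ N := by
  classical
  have hex : ∃ d, ∃ f ∈ N, f ≠ 0 ∧ f.totalDegree = d :=
    let ⟨f, hf, hf0⟩ := N.exists_mem_ne_zero_of_ne_bot hN0
    ⟨_, f, hf, hf0, rfl⟩
  obtain ⟨f, hf, hf0, hfd⟩ := Nat.find_spec hex
  have hvars : f.vars = ∅ := Finset.eq_empty_of_forall_notMem fun i hi => by
    obtain ⟨g, hg, hg0, hlt⟩ :=
      hN.exists_mem_totalDegree_lt hΛ ha hf hf0 (mem_vars_iff_degreeOf_ne_zero.1 hi)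
    exact Nat.find_min hex (hfd ▸ hlt) ⟨g, hg, hg0, rfl⟩
  obtain ⟨c, rfl⟩ : ∃ c, f = C c := ⟨_, vars_eq_empty_iff_eq_C.1 hvars⟩
  have h1 := N.smul_mem c⁻¹ hf
  rwa [smul_eq_C_mul, ← map_mul, inv_mul_cancel₀ (by simpa using hf0), map_one] at h1

end IsOmegaNInvariant

theorem isOmegaNInvariant_ker_lcoeff_zero :
    IsOmegaNInvariant Λ (-1) (LinearMap.ker (lcoeff ℂ (0 : Fin n →₀ ℕ))) := by
  intro i k f _
  simp [omegaNAct, ← constantCoeff_eq]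

end OmegaN

/-- the `W_n`-module `Ω(Λ_n, a)` is simple iff `a ≠ -1`. -/
theorem omegaN_simple_iff {n : ℕ} (hn : 0 < n) (Λ : Fin n → ℂ) (hΛ : ∀ j, Λ j ≠ 0)
    (a : ℂ) :
    (∀ N : Submodule ℂ (MvPolynomial (Fin n) ℂ),
        (∀ (i : Fin n) (k : Fin n → ℤ), ∀ f ∈ N, omegaNAct Λ a i k f ∈ N) →
        N = ⊥ ∨ N = ⊤)
      ↔ a ≠ -1 := by
  refine ⟨fun hsimple ha => ?_, fun ha N (hN : IsOmegaNInvariant Λ a N) => ?_⟩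
  · subst ha
    rcases hsimple _ isOmegaNInvariant_ker_lcoeff_zero with h | h
    · have hX : X ⟨0, hn⟩ ∈ LinearMap.ker (lcoeff ℂ (0 : Fin n →₀ ℕ)) := by simp
      rw [h] at hX
      exact X_ne_zero _ ((Submodule.mem_bot ℂ).1 hX)
    · have h1 : (1 : MvPolynomial (Fin n) ℂ) ∈ LinearMap.ker (lcoeff ℂ 0) := h ▸ Submodule.mem_top
      simp at h1
  · have ha' : a + 1 ≠ 0 := fun h => ha (eq_neg_of_add_eq_zero_left h)
    exact or_iff_not_imp_left.2 fun hN0 => hN.eq_top_of_one_mem (hN.one_mem hΛ ha' hN0)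
end

section
/- Suppose ψ ∈ ℂ[x] satisfies, for all integers k ≠ 0 and all a ∈ ℂ fixed, the identity ((k+1)(k+2)/k)(x - k(a+1))(ψ(x) - ψ(x-k)) = (x + 1 - (k+1)(a+1))(x + a + 1)(ψ(x+1) - ψ(x-k)) - (x - (k+1)(a+1))(x + a - k)(ψ(x) - ψ(x-k-1)). Then ψ(x) = bx + c for some constants b, c ∈ ℂ. -/
open Polynomial


lemma shift_const (p : Polynomial ℂ) (hp : p.comp (X + 1) = p) : ∃ c, p = C c := by
  have key : ∀ n : ℕ, p.eval (n : ℂ) = p.eval 0 := by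
    intro n
    induction n with
    | zero => simp
    | succ n ih =>
      have h1 := congrArg (eval (n : ℂ)) hp
      simp [eval_comp] at h1
      push_cast
      rw [h1]; exact ih
  refine ⟨p.eval 0, ?_⟩
  have h0 : p - C (p.eval 0) = 0 := by
    apply eq_zero_of_infinite_isRoot
    apply Set.Infinite.mono (s := Set.range (Nat.cast : ℕ → ℂ))
    · rintro x ⟨n, rfl⟩
      simp [IsRoot, key n]
    · exact Set.infinite_range_of_injective Nat.cast_injective
  linear_combination (norm := ring_nf) h0


/-- if `ψ ∈ ℂ[x]` satisfies equation (3.7) for all integers `k ≠ 0`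
(with `a ∈ ℂ` fixed), then `ψ` is linear: `ψ(x) = bx + c`. -/
theorem functional_equation_forces_linear (a : ℂ) (ψ : Polynomial ℂ)
    (h : ∀ k : ℤ, k ≠ 0 →
      C (((k : ℂ) + 1) * ((k : ℂ) + 2) / (k : ℂ)) * (X - C ((k : ℂ) * (a + 1))) *
          (ψ - ψ.comp (X - C (k : ℂ)))
        = (X + 1 - C (((k : ℂ) + 1) * (a + 1))) * (X + C a + 1) *
            (ψ.comp (X + 1) - ψ.comp (X - C (k : ℂ)))
          - (X - C (((k : ℂ) + 1) * (a + 1))) * (X + C a - C (k : ℂ)) *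
            (ψ - ψ.comp (X - C ((k : ℂ) + 1)))) :
    ∃ b c : ℂ, ψ = C b * X + C c := by
  have h2 := h (-2) (by norm_num)
  push_cast at h2
  norm_num at h2
  have hC2 : (C (2:ℂ) : Polynomial ℂ) = 2 := map_ofNat C 2
  rw [hC2] at h2
  have key : (X + C a + 1) * (X + C a + 2) *
      (2 * ψ.comp (X + 1) - ψ - ψ.comp (X + 2)) = 0 := by
    linear_combination -h2
  have hP : (X + C a + 1) * (X + C a + 2) ≠ (0 : Polynomial ℂ) := by
    intro hP0
    have := congrArg (eval (-a)) hP0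
    simp at this
  have hsum : 2 * ψ.comp (X + 1) - ψ - ψ.comp (X + 2) = 0 :=
    (mul_eq_zero.mp key).resolve_left hP
  have hX2 : ((X + 1 : Polynomial ℂ).comp (X + 1)) = X + 2 := by
    simp [add_comp]; ring
  have hd : (ψ.comp (X + 1) - ψ).comp (X + 1) = ψ.comp (X + 1) - ψ := by
    rw [sub_comp, comp_assoc, hX2]
    linear_combination -hsum
  obtain ⟨e, he⟩ := shift_const _ hd
  have hq : (ψ - C e * X).comp (X + 1) = ψ - C e * X := by
    rw [sub_comp, mul_comp, C_comp, X_comp]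
    linear_combination he
  obtain ⟨c, hc⟩ := shift_const _ hq
  exact ⟨e, c, by linear_combination hc⟩
end

section
/- Let g_2(x) = b (b ∈ ℂ, b ≠ 0), f_1(x) = (x+a)(x-(a+1)), f_{k,0}(x) = (x - k(a+1)) ∏_{i=0}^{k-1}(x+a-i), and define g_{k+1}(x) = (1/(k-1))(g_k(x-1)f_1(x) - g_k(x)f_1(x-k)) for k = 2, 3, 4. If additionally g_5(x) = f_{2,0}(x)g_3(x-2) + f_{3,0}(x-2)g_2(x) + g_2(x)g_3(x-2) - f_{3,0}(x)g_2(x-3) - f_{2,0}(x-3)g_3(x) - g_3(x)g_2(x-3), then b = 4a³ + 6a² + 2a. -/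
open Polynomial

/-- with `g₂(x) = b ≠ 0`, `f₁(x) = (x+a)(x-(a+1))`,
`f_{k,0}(x) = (x-k(a+1))∏_{i=0}^{k-1}(x+a-i)`, and
`g_{k+1}(x) = (1/(k-1))(g_k(x-1)f₁(x) - g_k(x)f₁(x-k))` for `k = 2,3,4`, the
consistency condition coming from `d_5 = [d_2, d_3]` forces `b = 4a³+6a²+2a`. -/
theorem consistency_forces_b (a b : ℂ) (hb : b ≠ 0)
    (f1 f20 f30 g2 g3 g4 g5 : Polynomial ℂ)
    (hf1 : f1 = (X + C a) * (X - C (a + 1)))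
    (hf20 : f20 = (X - C (2 * (a + 1))) * ∏ i ∈ Finset.range 2, (X + C a - C (i : ℂ)))
    (hf30 : f30 = (X - C (3 * (a + 1))) * ∏ i ∈ Finset.range 3, (X + C a - C (i : ℂ)))
    (hg2 : g2 = C b)
    (hg3 : g3 = C (1 / ((2 : ℂ) - 1)) *
      (g2.comp (X - 1) * f1 - g2 * f1.comp (X - C (2 : ℂ))))
    (hg4 : g4 = C (1 / ((3 : ℂ) - 1)) *
      (g3.comp (X - 1) * f1 - g3 * f1.comp (X - C (3 : ℂ))))
    (hg5 : g5 = C (1 / ((4 : ℂ) - 1)) *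
      (g4.comp (X - 1) * f1 - g4 * f1.comp (X - C (4 : ℂ))))
    (halt : g5 = f20 * g3.comp (X - 2) + f30.comp (X - 2) * g2 + g2 * g3.comp (X - 2)
      - f30 * g2.comp (X - 3) - f20.comp (X - 3) * g3 - g3 * g2.comp (X - 3)) :
    b = 4 * a ^ 3 + 6 * a ^ 2 + 2 * a := by
  subst hf1 hf20 hf30 hg2 hg3 hg4 hg5
  have h := congrArg (eval 0) halt
  simp only [Finset.prod_range_succ, Finset.prod_range_zero, eval_comp, eval_mul, eval_add,
    eval_sub, eval_C, eval_X, eval_one, eval_ofNat, one_mul] at h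
  push_cast at h
  ring_nf at h
  have key : b * (b - (4 * a ^ 3 + 6 * a ^ 2 + 2 * a)) = 0 := by linear_combination h / 8
  rcases mul_eq_zero.1 key with h1 | h1
  · exact absurd h1 hb
  · linear_combination h1
end
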